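/- arXiv:1903.06291 — 4 statements merged into one kernel-verified Lean document; each statement's English description precedes it below -/
import Mathlib

section
/- Fix α>1, δ>0 and x₀>0, and let 1<β₁<β₂. For i=1,2 set A_i=(α−1)/(αβ_i−1), B_i=(β_i−1)/(αβ_i−1), and let y_i>0 be the unique value such that the solution of the system dx/dt = x(1−x−αy), dy/dt = δy(1−y−β_i x) on [0,∞) with initial condition (x₀,y_i) converges to (A_i,B_i) as t→∞. Then y₁<y₂; that is, for each fixed x>0 the separatrix value s(x,β) is strictly increasing in β. -/
/-!
Suppose `y₂ ≤ y₁`. A competitive system is cooperative in the variables `(x, -y)`, so the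
differences `u = x₂ - x₁`, `v = y₁ - y₂` solve a linear system `u' = a u + p v`,
`v' = b v + q u + r` with `p, q ≥ 0` and forcing `r = δ (β₂ - β₁) x₂ y₂ ≥ 0`. Starting from
`u(0) = 0 ≤ v(0)`, such a system stays in the closed positive quadrant, so `x₁ ≤ x₂` for all
times and `A₁ ≤ A₂` in the limit. But `A = (α - 1) / (α β - 1)` is strictly decreasing in `β`.
-/

open Filter Set

theorem pos_on_Icc_of_forall_Ico_pos {f : ℝ → ℝ} {a b : ℝ} (hf : ContinuousOn f (Icc a b))
    (h : ∀ τ ∈ Icc a b, (∀ t ∈ Ico a τ, 0 < f t) → 0 < f τ) : ∀ t ∈ Icc a b, 0 < f t := by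
  by_contra! hneg
  obtain ⟨t, ht, hft⟩ := hneg
  set S := Icc a b ∩ f ⁻¹' Iic 0
  have hbdd : BddBelow S := ⟨a, fun s hs => hs.1.1⟩
  have hmem : sInf S ∈ S :=
    (hf.preimage_isClosed_of_isClosed isClosed_Icc isClosed_Iic).csInf_mem ⟨t, ht, hft⟩ hbdd
  refine not_lt.2 hmem.2 (h _ hmem.1 fun s hs => ?_)
  by_contra! hfs
  exact (csInf_le hbdd ⟨⟨hs.1, hs.2.le.trans hmem.1.2⟩, hfs⟩).not_gt hs.2

theorem pos_of_hasDerivWithinAt_ge_mul {w w' : ℝ → ℝ} {a b m : ℝ}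
    (hw : ContinuousOn w (Icc a b)) (hw' : ∀ x ∈ Ico a b, HasDerivWithinAt w (w' x) (Ici x) x)
    (hbound : ∀ x ∈ Ico a b, m * w x ≤ w' x) (ha : 0 < w a) : ∀ x ∈ Icc a b, 0 < w x := by
  intro x hx
  -- Grönwall's inequality for `-w`, whose right derivative is at most `m * (-w)`
  have := le_gronwallBound_of_liminf_deriv_right_le (f' := fun t => -w' t) (K := m) (ε := 0)
    hw.neg (fun t ht r hr => (hw' t ht).neg.liminf_right_slope_le hr) le_rfl
    (fun t ht => by simp only [Pi.neg_apply]; linarith [hbound t ht]) x hx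
  rw [gronwallBound_ε0, Pi.neg_apply, Pi.neg_apply] at this
  nlinarith [Real.exp_pos (m * (x - a))]

theorem pos_of_cooperative_on_Icc {a b p q r₁ r₂ u v : ℝ → ℝ} {t₀ T : ℝ}
    (ha : ContinuousOn a (Icc t₀ T)) (hb : ContinuousOn b (Icc t₀ T))
    (hp : ∀ t ∈ Ico t₀ T, 0 ≤ p t) (hq : ∀ t ∈ Ico t₀ T, 0 ≤ q t)
    (hr₁ : ∀ t ∈ Ico t₀ T, 0 ≤ r₁ t) (hr₂ : ∀ t ∈ Ico t₀ T, 0 ≤ r₂ t)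
    (hu : ContinuousOn u (Icc t₀ T)) (hv : ContinuousOn v (Icc t₀ T))
    (hu' : ∀ t ∈ Ico t₀ T, HasDerivWithinAt u (a t * u t + p t * v t + r₁ t) (Ici t) t)
    (hv' : ∀ t ∈ Ico t₀ T, HasDerivWithinAt v (b t * v t + q t * u t + r₂ t) (Ici t) t)
    (hu₀ : 0 < u t₀) (hv₀ : 0 < v t₀) : ∀ t ∈ Icc t₀ T, 0 < u t ∧ 0 < v t := by
  obtain ⟨ma, hma⟩ := isCompact_Icc.bddBelow_image ha
  obtain ⟨mb, hmb⟩ := isCompact_Icc.bddBelow_image hb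
  have hmin := pos_on_Icc_of_forall_Ico_pos (f := fun t => min (u t) (v t)) (hu.inf hv)
    fun τ hτ hpos => ?_
  · exact fun t ht => lt_min_iff.1 (hmin t ht)
  have hIcc : Icc t₀ τ ⊆ Icc t₀ T := Icc_subset_Icc_right hτ.2
  have hIco : Ico t₀ τ ⊆ Ico t₀ T := Ico_subset_Ico_right hτ.2
  refine lt_min (pos_of_hasDerivWithinAt_ge_mul (m := ma) (hu.mono hIcc)
    (fun t ht => hu' t (hIco ht)) (fun t ht => ?_) hu₀ τ (right_mem_Icc.2 hτ.1))
    (pos_of_hasDerivWithinAt_ge_mul (m := mb) (hv.mono hIcc)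
    (fun t ht => hv' t (hIco ht)) (fun t ht => ?_) hv₀ τ (right_mem_Icc.2 hτ.1))
  all_goals
    obtain ⟨hut, hvt⟩ := lt_min_iff.1 (hpos t ht)
    have ht' : t ∈ Icc t₀ T := Ico_subset_Icc_self (hIco ht)
  · nlinarith [hma (mem_image_of_mem a ht'), hp t (hIco ht), hr₁ t (hIco ht)]
  · nlinarith [hmb (mem_image_of_mem b ht'), hq t (hIco ht), hr₂ t (hIco ht)]

theorem nonneg_of_cooperative {a b p q r₁ r₂ u v : ℝ → ℝ} {t₀ : ℝ}
    (ha : ContinuousOn a (Ici t₀)) (hb : ContinuousOn b (Ici t₀))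
    (hp : ContinuousOn p (Ici t₀)) (hq : ContinuousOn q (Ici t₀))
    (hp₀ : ∀ t ∈ Ici t₀, 0 ≤ p t) (hq₀ : ∀ t ∈ Ici t₀, 0 ≤ q t)
    (hr₁ : ∀ t ∈ Ici t₀, 0 ≤ r₁ t) (hr₂ : ∀ t ∈ Ici t₀, 0 ≤ r₂ t)
    (hu : ∀ t ∈ Ici t₀, HasDerivWithinAt u (a t * u t + p t * v t + r₁ t) (Ici t₀) t)
    (hv : ∀ t ∈ Ici t₀, HasDerivWithinAt v (b t * v t + q t * u t + r₂ t) (Ici t₀) t)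
    (hu₀ : 0 ≤ u t₀) (hv₀ : 0 ≤ v t₀) : ∀ t ∈ Ici t₀, 0 ≤ u t ∧ 0 ≤ v t := by
  intro T hT
  have hsub : Icc t₀ T ⊆ Ici t₀ := Icc_subset_Ici_self
  obtain ⟨Ma, hMa⟩ := isCompact_Icc.bddAbove_image ((ha.add hp).mono hsub)
  obtain ⟨Mb, hMb⟩ := isCompact_Icc.bddAbove_image ((hb.add hq).mono hsub)
  set M := max Ma Mb
  -- `M` dominates `a + p` and `b + q` on `[t₀, T]`, so perturbing both components by
  -- `ε e^{M (t - T)}` keeps the forcing nonnegative and makes the initial data positive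
  have hpert : ∀ ε > 0, 0 < u T + ε ∧ 0 < v T + ε := by
    intro ε hε
    set e : ℝ → ℝ := fun t => ε * Real.exp (M * (t - T))
    have he : ∀ t, HasDerivAt e (M * e t) t := fun t =>
      ((((hasDerivAt_id t).sub_const T).const_mul M).exp.const_mul ε).congr_deriv
        (by simp [e]; ring)
    have he₀ : ∀ t, 0 < e t := fun t => by positivity
    have := pos_of_cooperative_on_Icc (u := fun t => u t + e t) (v := fun t => v t + e t)
      (r₁ := fun t => r₁ t + (M - a t - p t) * e t) (r₂ := fun t => r₂ t + (M - b t - q t) * e t)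
      (ha.mono hsub) (hb.mono hsub) (fun t ht => hp₀ t (hsub (Ico_subset_Icc_self ht)))
      (fun t ht => hq₀ t (hsub (Ico_subset_Icc_self ht))) (fun t ht => ?_) (fun t ht => ?_)
      ?_ ?_ (fun t ht => ?_) (fun t ht => ?_) (by linarith [he₀ t₀]) (by linarith [he₀ t₀])
      T (right_mem_Icc.2 hT)
    · simpa [e] using this
    · have ht' := Ico_subset_Icc_self ht
      nlinarith [hr₁ t (hsub ht'), hMa (mem_image_of_mem (fun t => a t + p t) ht'), he₀ t,
        le_max_left Ma Mb]
    · have ht' := Ico_subset_Icc_self ht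
      nlinarith [hr₂ t (hsub ht'), hMb (mem_image_of_mem (fun t => b t + q t) ht'), he₀ t,
        le_max_right Ma Mb]
    · exact fun t ht => ((hu t (hsub ht)).continuousWithinAt.mono hsub).add
        (he t).continuousAt.continuousWithinAt
    · exact fun t ht => ((hv t (hsub ht)).continuousWithinAt.mono hsub).add
        (he t).continuousAt.continuousWithinAt
    · exact (((hu t (hsub (Ico_subset_Icc_self ht))).mono (Ici_subset_Ici.2 ht.1)).add
        (he t).hasDerivWithinAt).congr_deriv (by ring)
    · exact (((hv t (hsub (Ico_subset_Icc_self ht))).mono (Ici_subset_Ici.2 ht.1)).add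
        (he t).hasDerivWithinAt).congr_deriv (by ring)
  exact ⟨le_of_forall_pos_lt_add fun ε hε => by simpa using (hpert ε hε).1,
    le_of_forall_pos_lt_add fun ε hε => by simpa using (hpert ε hε).2⟩

theorem nonneg_of_hasDerivWithinAt_mul {f c : ℝ → ℝ} {t₀ : ℝ} (hc : ContinuousOn c (Ici t₀))
    (hf : ∀ t ∈ Ici t₀, HasDerivWithinAt f (f t * c t) (Ici t₀) t) (h₀ : 0 ≤ f t₀) :
    ∀ t ∈ Ici t₀, 0 ≤ f t := fun t ht =>
  (nonneg_of_cooperative (p := 0) (q := 0) (r₁ := 0) (r₂ := 0) hc hc continuousOn_const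
    continuousOn_const (fun _ _ => le_rfl) (fun _ _ => le_rfl) (fun _ _ => le_rfl)
    (fun _ _ => le_rfl) (fun s hs => (hf s hs).congr_deriv (by simp [mul_comm]))
    (fun s hs => (hf s hs).congr_deriv (by simp [mul_comm])) h₀ h₀ t ht).1

def IsLotkaVolterraSolution (α β δ : ℝ) (x y : ℝ → ℝ) : Prop :=
  ∀ t ∈ Ici (0 : ℝ), HasDerivWithinAt x (x t * (1 - x t - α * y t)) (Ici 0) t ∧
    HasDerivWithinAt y (δ * y t * (1 - y t - β * x t)) (Ici 0) t

namespace IsLotkaVolterraSolution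

variable {α β δ : ℝ} {x y : ℝ → ℝ}

theorem continuousOn_x (h : IsLotkaVolterraSolution α β δ x y) : ContinuousOn x (Ici 0) :=
  fun t ht => (h t ht).1.continuousWithinAt

theorem continuousOn_y (h : IsLotkaVolterraSolution α β δ x y) : ContinuousOn y (Ici 0) :=
  fun t ht => (h t ht).2.continuousWithinAt

theorem x_nonneg (h : IsLotkaVolterraSolution α β δ x y) (h₀ : 0 ≤ x 0) :
    ∀ t ∈ Ici (0 : ℝ), 0 ≤ x t :=
  have := h.continuousOn_x; have := h.continuousOn_y
  nonneg_of_hasDerivWithinAt_mul (by fun_prop) (fun t ht => (h t ht).1) h₀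

theorem y_nonneg (h : IsLotkaVolterraSolution α β δ x y) (h₀ : 0 ≤ y 0) :
    ∀ t ∈ Ici (0 : ℝ), 0 ≤ y t :=
  have := h.continuousOn_x; have := h.continuousOn_y
  nonneg_of_hasDerivWithinAt_mul (c := fun t => δ * (1 - y t - β * x t)) (by fun_prop)
    (fun t ht => (h t ht).2.congr_deriv (by ring)) h₀

theorem x_le_and_y_ge {β₁ β₂ : ℝ} {x₁ y₁ x₂ y₂ : ℝ → ℝ}
    (h₁ : IsLotkaVolterraSolution α β₁ δ x₁ y₁) (h₂ : IsLotkaVolterraSolution α β₂ δ x₂ y₂)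
    (hα : 0 ≤ α) (hδ : 0 ≤ δ) (hβ₁ : 0 ≤ β₁) (hβ : β₁ ≤ β₂)
    (hx₁₀ : 0 ≤ x₁ 0) (hx₀ : x₁ 0 ≤ x₂ 0) (hy₂₀ : 0 ≤ y₂ 0) (hy₀ : y₂ 0 ≤ y₁ 0) :
    ∀ t ∈ Ici (0 : ℝ), x₁ t ≤ x₂ t ∧ y₂ t ≤ y₁ t := by
  have hx₁ := h₁.x_nonneg hx₁₀
  have hx₂ := h₂.x_nonneg (hx₁₀.trans hx₀)
  have hy₂ := h₂.y_nonneg hy₂₀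
  have := h₁.continuousOn_x; have := h₁.continuousOn_y
  have := h₂.continuousOn_x; have := h₂.continuousOn_y
  have hdiff := nonneg_of_cooperative (u := fun t => x₂ t - x₁ t) (v := fun t => y₁ t - y₂ t)
    (a := fun t => 1 - x₁ t - x₂ t - α * y₂ t) (b := fun t => δ * (1 - y₁ t - y₂ t - β₁ * x₁ t))
    (p := fun t => α * x₁ t) (q := fun t => δ * β₁ * y₂ t) (r₁ := 0)
    (r₂ := fun t => δ * (β₂ - β₁) * (y₂ t * x₂ t)) (by fun_prop) (by fun_prop) (by fun_prop)
    (by fun_prop) (fun t ht => mul_nonneg hα (hx₁ t ht))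
    (fun t ht => mul_nonneg (mul_nonneg hδ hβ₁) (hy₂ t ht)) (fun _ _ => le_rfl)
    (fun t ht => mul_nonneg (mul_nonneg hδ (sub_nonneg.2 hβ)) (mul_nonneg (hy₂ t ht) (hx₂ t ht)))
    (fun t ht => ((h₂ t ht).1.sub (h₁ t ht).1).congr_deriv (by simp only [Pi.zero_apply]; ring))
    (fun t ht => ((h₁ t ht).2.sub (h₂ t ht).2).congr_deriv (by ring))
    (sub_nonneg.2 hx₀) (sub_nonneg.2 hy₀)
  exact fun t ht => ⟨sub_nonneg.1 (hdiff t ht).1, sub_nonneg.1 (hdiff t ht).2⟩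

end IsLotkaVolterraSolution

theorem stmt_16_general (α δ x₀ : ℝ) (hα : 1 < α) (hδ : 0 < δ) (hx₀ : 0 < x₀)
    (β₁ β₂ : ℝ) (hβ₁ : 1 < β₁) (hβ₁₂ : β₁ < β₂)
    (A₁ B₁ A₂ B₂ : ℝ)
    (hA₁ : A₁ = (α - 1) / (α * β₁ - 1))
    (hA₂ : A₂ = (α - 1) / (α * β₂ - 1))
    (y₁ y₂ : ℝ) (hy₂ : 0 < y₂)
    (x1 Y1 : ℝ → ℝ)
    (hx1 : ∀ t ∈ Set.Ici (0 : ℝ),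
      HasDerivWithinAt x1 (x1 t * (1 - x1 t - α * Y1 t)) (Set.Ici 0) t)
    (hY1 : ∀ t ∈ Set.Ici (0 : ℝ),
      HasDerivWithinAt Y1 (δ * Y1 t * (1 - Y1 t - β₁ * x1 t)) (Set.Ici 0) t)
    (hx10 : x1 0 = x₀) (hY10 : Y1 0 = y₁)
    (hconv1 : Tendsto (fun t => (x1 t, Y1 t)) atTop (nhds (A₁, B₁)))
    (x2 Y2 : ℝ → ℝ)
    (hx2 : ∀ t ∈ Set.Ici (0 : ℝ),
      HasDerivWithinAt x2 (x2 t * (1 - x2 t - α * Y2 t)) (Set.Ici 0) t)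
    (hY2 : ∀ t ∈ Set.Ici (0 : ℝ),
      HasDerivWithinAt Y2 (δ * Y2 t * (1 - Y2 t - β₂ * x2 t)) (Set.Ici 0) t)
    (hx20 : x2 0 = x₀) (hY20 : Y2 0 = y₂)
    (hconv2 : Tendsto (fun t => (x2 t, Y2 t)) atTop (nhds (A₂, B₂))) :
    y₁ < y₂ := by
  by_contra! hy
  have h₁ : IsLotkaVolterraSolution α β₁ δ x1 Y1 := fun t ht => ⟨hx1 t ht, hY1 t ht⟩
  have h₂ : IsLotkaVolterraSolution α β₂ δ x2 Y2 := fun t ht => ⟨hx2 t ht, hY2 t ht⟩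
  have hx := h₁.x_le_and_y_ge h₂ (by linarith) hδ.le (by linarith) hβ₁₂.le (hx10 ▸ hx₀.le)
    (by rw [hx10, hx20]) (hY20 ▸ hy₂.le) (by rw [hY10, hY20]; exact hy)
  have hA : A₁ ≤ A₂ := le_of_tendsto_of_tendsto hconv1.fst_nhds hconv2.fst_nhds <|
    eventually_ge_atTop 0 |>.mono fun t ht => (hx t ht).1
  have hA' : A₂ < A₁ := by
    rw [hA₁, hA₂]
    exact div_lt_div_of_pos_left (by linarith) (by nlinarith) (by nlinarith)
  exact hA.not_gt hA'

/-- The separatrix value `s(x₀, β)` is strictly increasing in the competition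
parameter `β`: if `1 < β₁ < β₂` and `(x₀, yᵢ)` lies on the stable manifold of
the saddle `(Aᵢ, Bᵢ)` for the system with parameter `βᵢ`, then `y₁ < y₂`. -/
theorem stmt_16 (α δ x₀ : ℝ) (hα : 1 < α) (hδ : 0 < δ) (hx₀ : 0 < x₀)
    (β₁ β₂ : ℝ) (hβ₁ : 1 < β₁) (hβ₁₂ : β₁ < β₂)
    (A₁ B₁ A₂ B₂ : ℝ)
    (hA₁ : A₁ = (α - 1) / (α * β₁ - 1)) (hB₁ : B₁ = (β₁ - 1) / (α * β₁ - 1))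
    (hA₂ : A₂ = (α - 1) / (α * β₂ - 1)) (hB₂ : B₂ = (β₂ - 1) / (α * β₂ - 1))
    (y₁ y₂ : ℝ) (hy₁ : 0 < y₁) (hy₂ : 0 < y₂)
    (x1 Y1 : ℝ → ℝ)
    (hx1 : ∀ t ∈ Set.Ici (0 : ℝ),
      HasDerivWithinAt x1 (x1 t * (1 - x1 t - α * Y1 t)) (Set.Ici 0) t)
    (hY1 : ∀ t ∈ Set.Ici (0 : ℝ),
      HasDerivWithinAt Y1 (δ * Y1 t * (1 - Y1 t - β₁ * x1 t)) (Set.Ici 0) t)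
    (hx10 : x1 0 = x₀) (hY10 : Y1 0 = y₁)
    (hconv1 : Tendsto (fun t => (x1 t, Y1 t)) atTop (nhds (A₁, B₁)))
    (x2 Y2 : ℝ → ℝ)
    (hx2 : ∀ t ∈ Set.Ici (0 : ℝ),
      HasDerivWithinAt x2 (x2 t * (1 - x2 t - α * Y2 t)) (Set.Ici 0) t)
    (hY2 : ∀ t ∈ Set.Ici (0 : ℝ),
      HasDerivWithinAt Y2 (δ * Y2 t * (1 - Y2 t - β₂ * x2 t)) (Set.Ici 0) t)
    (hx20 : x2 0 = x₀) (hY20 : Y2 0 = y₂)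
    (hconv2 : Tendsto (fun t => (x2 t, Y2 t)) atTop (nhds (A₂, B₂))) :
    y₁ < y₂ :=
  stmt_16_general α δ x₀ hα hδ hx₀ β₁ β₂ hβ₁ hβ₁₂ A₁ B₁ A₂ B₂ hA₁ hA₂ y₁ y₂ hy₂ x1 Y1 hx1 hY1 hx10
    hY10 hconv1 x2 Y2 hx2 hY2 hx20 hY20 hconv2
end

section
/- Fix α>1, β>1 and set A=(α−1)/(αβ−1), B=(β−1)/(αβ−1) (note A and B do not depend on δ). Let 0<δ₁<δ₂ and x₀>0, and for i=1,2 let y_i>0 be the unique value such that the solution of the system dx/dt = x(1−x−αy), dy/dt = δ_i y(1−y−βx) on [0,∞) with initial condition (x₀,y_i) converges to (A,B) as t→∞. If 0<x₀<A then y₂<y₁ (the separatrix value s(x₀,δ) is strictly decreasing in δ), while if x₀>A then y₁<y₂ (s(x₀,δ) is strictly increasing in δ). -/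
/-!
Put `ε = 1` if `x₀ < A` and `ε = -1` if `x₀ > A`, and use the coordinates `z = ε (x - A)`,
`v = ε (log y - log B)`, in which the saddle is the origin.

A solution converging to the saddle does not reach it in finite time (uniqueness), and it never
meets the closed quadrants `{±(x - A) ≥ 0 ≥ ±(y - B)}`: these are forward invariant, and on them
`V = (1 + β) log x - (α + 1) / δ log y`, whose derivative is `(αβ - 1)((x - A) - (y - B))`, moves
monotonically away from its value at the saddle. Hence `z` and `v` stay negative, `z` increases
to `0`, and the orbit is the graph of a function `v(z) < 0` with `v → 0` as `z → 0` and
`dv/dz = δ G(z, v)`, where `G > 0` is nondecreasing in `v`.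

For `δ₁ < δ₂` suppose `v₁ ≤ v₂` at the initial `z`. Where the graphs meet, `v₂ - v₁` has
derivative `(δ₂ - δ₁) G > 0`, so `v₁ ≤ v₂` throughout; then `v₁ / δ₁ - v₂ / δ₂`, whose derivative
is `G(z, v₁) - G(z, v₂) ≤ 0`, is nonincreasing with limit `0`, which forces `v₂ ≥ 0` initially.
-/

open Filter Set Real Topology

theorem eq_of_hasDerivWithinAt_of_stationary {E : Type*} [NormedAddCommGroup E]
    [NormedSpace ℝ E] {v : ℝ → E → E} {s : Set E} {K : NNReal} {f : ℝ → E} {c : E} {τ : ℝ}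
    (hf : ∀ t ∈ Ici (0 : ℝ), HasDerivWithinAt f (v t (f t)) (Ici 0) t)
    (hv : ∀ t ∈ Ioc 0 τ, LipschitzOnWith K (v t) s) (hfs : ∀ t ∈ Ioc 0 τ, f t ∈ s)
    (hc : ∀ t ∈ Ioc 0 τ, v t c = 0) (hcs : c ∈ s) (hτ : 0 ≤ τ) (hfτ : f τ = c) : f 0 = c :=
  ODE_solution_unique_of_mem_Icc_left (g := fun _ => c) hv
    (fun t ht => (hf t ht.1).continuousWithinAt.mono Icc_subset_Ici_self)
    (fun t ht => ((hf t ht.1.le).hasDerivAt (Ici_mem_nhds ht.1)).hasDerivWithinAt) hfs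
    continuousOn_const (fun t ht => by simpa [hc t ht] using hasDerivWithinAt_const t _ c)
    (fun _ _ => hcs) hfτ ⟨le_rfl, hτ⟩

theorem pos_of_hasDerivWithinAt_mul {x g : ℝ → ℝ} (hg : ContinuousOn g (Ici 0))
    (hx : ∀ t ∈ Ici (0 : ℝ), HasDerivWithinAt x (x t * g t) (Ici 0) t) (h0 : 0 < x 0) :
    ∀ t ∈ Ici (0 : ℝ), 0 < x t := by
  intro T hT
  by_contra! hxT
  obtain ⟨τ, hτ, hxτ⟩ := intermediate_value_Icc' (mem_Ici.1 hT)
    (fun t ht => (hx t ht.1).continuousWithinAt.mono Icc_subset_Ici_self) ⟨hxT, h0.le⟩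
  obtain ⟨C, hC⟩ := (isCompact_Icc (a := (0 : ℝ)) (b := τ)).exists_bound_of_continuousOn
    (hg.mono fun _ ht => ht.1)
  have hlip : ∀ t ∈ Ioc 0 τ, LipschitzOnWith C.toNNReal (fun z => z * g t) univ := by
    intro t ht
    have hsmul : LipschitzWith ‖g t‖₊ fun z : ℝ => z * g t := by
      simpa only [smul_eq_mul, mul_comm] using lipschitzWith_smul (β := ℝ) (g t)
    refine (hsmul.weaken ?_).lipschitzOnWith
    simpa [← NNReal.coe_le_coe, Real.coe_toNNReal', le_max_iff] using
      Or.inl (hC t (Ioc_subset_Icc_self ht))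
  exact h0.ne' (eq_of_hasDerivWithinAt_of_stationary (v := fun t z => z * g t) hx hlip
    (fun _ _ => mem_univ _) (fun _ _ => zero_mul _) (mem_univ _) hτ.1 hxτ)

theorem eq_of_hasDerivWithinAt_of_apply_eq_zero {E : Type*} [NormedAddCommGroup E]
    [NormedSpace ℝ E] {F : E → E} {f : ℝ → E} {c : E} {τ : ℝ} (hF : ContDiff ℝ 1 F)
    (hc : F c = 0) (hf : ∀ t ∈ Ici (0 : ℝ), HasDerivWithinAt f (F (f t)) (Ici 0) t)
    (hτ : 0 ≤ τ) (hfτ : f τ = c) : f 0 = c := by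
  have hcont : ContinuousOn f (Icc 0 τ) :=
    fun t ht => (hf t ht.1).continuousWithinAt.mono Icc_subset_Ici_self
  obtain ⟨K, hK⟩ := hF.locallyLipschitz.locallyLipschitzOn.exists_lipschitzOnWith_of_compact
    (isCompact_Icc.image_of_continuousOn hcont)
  exact eq_of_hasDerivWithinAt_of_stationary (v := fun _ => F) hf (fun _ _ => hK)
    (fun t ht => mem_image_of_mem f (Ioc_subset_Icc_self ht)) (fun _ _ => hc)
    ⟨τ, right_mem_Icc.2 hτ, hfτ⟩ hτ hfτ

theorem strictMonoOn_and_image_eq_of_hasDerivWithinAt_pos {q q' : ℝ → ℝ} {b : ℝ}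
    (hq : ∀ t ∈ Ici (0 : ℝ), HasDerivWithinAt q (q' t) (Ici 0) t)
    (hq' : ∀ t ∈ Ici (0 : ℝ), 0 < q' t) (hlim : Tendsto q atTop (𝓝 b)) :
    StrictMonoOn q (Ici 0) ∧ q '' Ici 0 = Ico (q 0) b := by
  have hcont : ContinuousOn q (Ici 0) := fun t ht => (hq t ht).continuousWithinAt
  have hmono : StrictMonoOn q (Ici 0) :=
    strictMonoOn_of_hasDerivWithinAt_pos (convex_Ici 0) hcont
      (fun t ht => (hq t (interior_subset ht)).mono interior_subset)
      (fun t ht => hq' t (interior_subset ht))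
  refine ⟨hmono, Subset.antisymm ?_ fun z hz => ?_⟩
  · rintro _ ⟨t, ht, rfl⟩
    have ht' : t + 1 ∈ Ici (0 : ℝ) := mem_Ici.2 (by linarith [mem_Ici.1 ht])
    refine ⟨hmono.monotoneOn self_mem_Ici ht ht,
      (hmono ht ht' (lt_add_one t)).trans_le (ge_of_tendsto hlim ?_)⟩
    filter_upwards [eventually_ge_atTop (t + 1)] with s hs
    exact hmono.monotoneOn ht' (mem_Ici.2 (le_trans ht' hs)) hs
  obtain ⟨T, hzT, hT⟩ := ((hlim.eventually (eventually_gt_nhds hz.2)).and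
    (eventually_ge_atTop 0)).exists
  obtain ⟨t, ht, rfl⟩ := intermediate_value_Icc hT (hcont.mono Icc_subset_Ici_self) ⟨hz.1, hzT.le⟩
  exact ⟨t, ht.1, rfl⟩

theorem StrictMonoOn.exists_continuous_inverse {q : ℝ → ℝ} {b : ℝ}
    (hmono : StrictMonoOn q (Ici 0)) (himage : q '' Ici 0 = Ico (q 0) b) :
    ∃ ξ : ℝ → ℝ, ξ (q 0) = 0 ∧ Tendsto ξ (𝓝[<] b) atTop ∧
      ∀ z ∈ Ico (q 0) b, ξ z ∈ Ici 0 ∧ q (ξ z) = z ∧ ContinuousWithinAt ξ (Ico (q 0) b) z := by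
  set ξ := Function.invFunOn q (Ici 0)
  have hξ : ∀ z ∈ Ico (q 0) b, ξ z ∈ Ici 0 ∧ q (ξ z) = z := fun z hz => by
    rw [← himage] at hz
    exact ⟨Function.invFunOn_mem hz, Function.invFunOn_eq hz⟩
  have hq : ∀ t ∈ Ici (0 : ℝ), q t ∈ Ico (q 0) b := fun t ht => himage ▸ mem_image_of_mem q ht
  have hξq : ∀ t ∈ Ici (0 : ℝ), ξ (q t) = t := fun t ht =>
    hmono.injOn (hξ (q t) (hq t ht)).1 ht (hξ (q t) (hq t ht)).2
  have hξmono : MonotoneOn ξ (Ico (q 0) b) := fun z hz z' hz' hzz' =>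
    (hmono.le_iff_le (hξ z hz).1 (hξ z' hz').1).1 (by rw [(hξ z hz).2, (hξ z' hz').2]; exact hzz')
  have hξimage : ξ '' Ico (q 0) b = Ici 0 := by
    rw [← himage, image_image, image_congr hξq, image_id']
  refine ⟨ξ, hξq 0 self_mem_Ici, tendsto_atTop.2 fun T => ?_, fun z hz =>
    ⟨(hξ z hz).1, (hξ z hz).2, ?_⟩⟩
  · have hT : max T 0 ∈ Ici (0 : ℝ) := le_max_right T 0
    filter_upwards [Ioo_mem_nhdsLT (hq _ hT).2] with z hz
    have hzs : z ∈ Ico (q 0) b := ⟨(hq _ hT).1.trans hz.1.le, hz.2⟩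
    refine (le_max_left T 0).trans ((hmono.lt_iff_lt hT (hξ z hzs).1).1 ?_).le
    rw [(hξ z hzs).2]
    exact hz.1
  rcases hz.1.eq_or_lt with rfl | hz0
  · refine (continuousWithinAt_right_of_monotoneOn_of_image_mem_nhdsWithin hξmono
      (Ico_mem_nhdsGE hz.2) ?_).mono Ico_subset_Ici_self
    rw [hξimage, hξq 0 self_mem_Ici]
    exact self_mem_nhdsWithin
  · refine (continuousAt_of_monotoneOn_of_image_mem_nhds hξmono (Ico_mem_nhds hz0 hz.2)
      ?_).continuousWithinAt
    rw [hξimage]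
    exact Ici_mem_nhds <| lt_of_le_of_ne (hξ z hz).1 fun h =>
      hz0.ne' (by rw [← (hξ z hz).2, ← h])

theorem exists_inverse_of_hasDerivWithinAt_pos {q q' : ℝ → ℝ} {b : ℝ}
    (hq : ∀ t ∈ Ici (0 : ℝ), HasDerivWithinAt q (q' t) (Ici 0) t)
    (hq' : ∀ t ∈ Ici (0 : ℝ), 0 < q' t) (hlim : Tendsto q atTop (𝓝 b)) :
    ∃ ξ : ℝ → ℝ, ξ (q 0) = 0 ∧ Tendsto ξ (𝓝[<] b) atTop ∧
      ∀ z ∈ Ico (q 0) b, ξ z ∈ Ici 0 ∧ q (ξ z) = z ∧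
        HasDerivWithinAt ξ (q' (ξ z))⁻¹ (Ico (q 0) b) z := by
  obtain ⟨hmono, himage⟩ := strictMonoOn_and_image_eq_of_hasDerivWithinAt_pos hq hq' hlim
  obtain ⟨ξ, hξ0, hξlim, hξ⟩ := hmono.exists_continuous_inverse himage
  refine ⟨ξ, hξ0, hξlim, fun z hz => ⟨(hξ z hz).1, (hξ z hz).2.1, ?_⟩⟩
  exact HasFDerivWithinAt.of_local_left_inverse
    (f' := ContinuousLinearEquiv.unitsEquivAut ℝ (Units.mk0 (q' (ξ z)) (hq' _ (hξ z hz).1).ne'))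
    (tendsto_nhdsWithin_iff.2 ⟨(hξ z hz).2.2,
      eventually_mem_nhdsWithin.mono fun z' hz' => (hξ z' hz').1⟩)
    (hq _ (hξ z hz).1) hz (eventually_mem_nhdsWithin.mono fun z' hz' => (hξ z' hz').2.1)

theorem eventually_gt_of_hasDerivWithinAt_pos {f : ℝ → ℝ} {f' x : ℝ}
    (hf : HasDerivWithinAt f f' (Ici x) x) (hf' : 0 < f') : ∀ᶠ z in 𝓝[>] x, f x < f z := by
  filter_upwards [(hasDerivWithinAt_iff_tendsto_slope' (lt_irrefl x)).1 hf.Ioi_of_Ici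
    (Ioi_mem_nhds hf'), self_mem_nhdsWithin] with z hz hxz
  rw [mem_preimage, mem_Ioi, slope_def_field, div_pos_iff_of_pos_right (sub_pos.2 hxz)] at hz
  exact sub_pos.1 hz

theorem nonneg_and_nonpos_of_inward {u w u' w' : ℝ → ℝ} {t₀ : ℝ}
    (hu : ∀ t ∈ Ici t₀, HasDerivWithinAt u (u' t) (Ici t₀) t)
    (hw : ∀ t ∈ Ici t₀, HasDerivWithinAt w (w' t) (Ici t₀) t)
    (hne : ∀ t ∈ Ici t₀, u t = 0 → w t ≠ 0)
    (hu' : ∀ t ∈ Ici t₀, u t = 0 → w t < 0 → 0 < u' t)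
    (hw' : ∀ t ∈ Ici t₀, w t = 0 → 0 < u t → w' t < 0)
    (hu₀ : 0 ≤ u t₀) (hw₀ : w t₀ ≤ 0) : ∀ t ∈ Ici t₀, 0 ≤ u t ∧ w t ≤ 0 := by
  intro T hT
  set Q := {t | 0 ≤ u t ∧ w t ≤ 0}
  have hucont : ContinuousOn u (Ici t₀) := fun t ht => (hu t ht).continuousWithinAt
  have hwcont : ContinuousOn w (Ici t₀) := fun t ht => (hw t ht).continuousWithinAt
  have hclosed : IsClosed (Q ∩ Icc t₀ T) := by
    have hQ : Q ∩ Icc t₀ T = (Icc t₀ T ∩ u ⁻¹' Ici 0) ∩ (Icc t₀ T ∩ w ⁻¹' Iic 0) := by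
      ext t; simp only [Q, mem_inter_iff, mem_ofPred_eq, mem_preimage, mem_Ici, mem_Iic]; tauto
    rw [hQ]
    exact ((hucont.mono Icc_subset_Ici_self).preimage_isClosed_of_isClosed isClosed_Icc
      isClosed_Ici).inter ((hwcont.mono Icc_subset_Ici_self).preimage_isClosed_of_isClosed
      isClosed_Icc isClosed_Iic)
  refine hclosed.Icc_subset_of_forall_mem_nhdsWithin ⟨hu₀, hw₀⟩ ?_ ⟨hT, le_rfl⟩
  rintro t ⟨⟨hut, hwt⟩, ht⟩
  have ht₀ : t ∈ Ici t₀ := ht.1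
  have hsub : Ici t ⊆ Ici t₀ := Ici_subset_Ici.2 ht.1
  have hle : 𝓝[>] t ≤ 𝓝[Ici t₀] t := nhdsWithin_mono _ (Ioi_subset_Ici_self.trans hsub)
  have hu_near := (hucont t ht₀).mono_left hle
  have hw_near := (hwcont t ht₀).mono_left hle
  rcases hut.eq_or_lt with hu0 | hupos
  · have hwneg : w t < 0 := hwt.lt_of_ne (hne t ht₀ hu0.symm)
    filter_upwards [eventually_gt_of_hasDerivWithinAt_pos ((hu t ht₀).mono hsub)
      (hu' t ht₀ hu0.symm hwneg), hw_near.eventually (eventually_lt_nhds hwneg)] with z h1 h2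
    exact ⟨hu0.trans_lt h1 |>.le, h2.le⟩
  rcases hwt.eq_or_lt with hw0 | hwneg
  · filter_upwards [eventually_gt_of_hasDerivWithinAt_pos ((hw t ht₀).neg.mono hsub)
      (neg_pos.2 (hw' t ht₀ hw0 hupos)), hu_near.eventually (eventually_gt_nhds hupos)]
      with z h1 h2
    simp only [Pi.neg_apply, hw0, neg_zero, neg_pos] at h1
    exact ⟨h2.le, h1.le⟩
  filter_upwards [hu_near.eventually (eventually_gt_nhds hupos),
    hw_near.eventually (eventually_lt_nhds hwneg)] with z h1 h2
  exact ⟨h1.le, h2.le⟩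

section Comparison

variable {G : ℝ → ℝ → ℝ} {v₁ v₂ : ℝ → ℝ} {a b δ₁ δ₂ : ℝ}

theorem le_of_hasDerivWithinAt_of_rate_lt (hδ₁₂ : δ₁ < δ₂)
    (hG : ∀ z ∈ Ico a b, ∀ v < 0, 0 < G z v)
    (hv₁ : ∀ z ∈ Ico a b, v₁ z < 0 ∧ HasDerivWithinAt v₁ (δ₁ * G z (v₁ z)) (Ico a b) z)
    (hv₂ : ∀ z ∈ Ico a b, HasDerivWithinAt v₂ (δ₂ * G z (v₂ z)) (Ico a b) z)
    (ha : v₁ a ≤ v₂ a) : ∀ z ∈ Ico a b, v₁ z ≤ v₂ z := by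
  intro z hz
  have hsub : Icc a z ⊆ Ico a b := Icc_subset_Ico_right hz.2
  have hright : ∀ s ∈ Ico a z, Ico a b ∈ 𝓝[≥] s := fun s hs =>
    Ico_mem_nhdsGE_of_mem ⟨hs.1, hs.2.trans hz.2⟩
  refine image_le_of_deriv_right_lt_deriv_boundary'
    (fun s hs => ((hv₁ s (hsub hs)).2.continuousWithinAt.mono hsub))
    (fun s hs => (hv₁ s (hsub (Ico_subset_Icc_self hs))).2.mono_of_mem_nhdsWithin (hright s hs))
    ha (fun s hs => ((hv₂ s (hsub hs)).continuousWithinAt.mono hsub))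
    (fun s hs => (hv₂ s (hsub (Ico_subset_Icc_self hs))).mono_of_mem_nhdsWithin (hright s hs))
    (fun s hs heq => ?_) ⟨hz.1, le_rfl⟩
  have hs' := hsub (Ico_subset_Icc_self hs)
  rw [← heq]
  exact mul_lt_mul_of_pos_right hδ₁₂ (hG s hs' _ (hv₁ s hs').1)

theorem lt_of_hasDerivWithinAt_of_rate_lt (hab : a < b) (hδ₁ : 0 < δ₁) (hδ₁₂ : δ₁ < δ₂)
    (hG_pos : ∀ z ∈ Ico a b, ∀ v < 0, 0 < G z v)
    (hG_mono : ∀ z ∈ Ico a b, MonotoneOn (G z) (Iio 0))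
    (hv₁ : ∀ z ∈ Ico a b, v₁ z < 0 ∧ HasDerivWithinAt v₁ (δ₁ * G z (v₁ z)) (Ico a b) z)
    (hv₂ : ∀ z ∈ Ico a b, v₂ z < 0 ∧ HasDerivWithinAt v₂ (δ₂ * G z (v₂ z)) (Ico a b) z)
    (hlim₁ : Tendsto v₁ (𝓝[<] b) (𝓝 0)) (hlim₂ : Tendsto v₂ (𝓝[<] b) (𝓝 0)) :
    v₂ a < v₁ a := by
  by_contra! ha
  have hle := le_of_hasDerivWithinAt_of_rate_lt hδ₁₂ hG_pos hv₁ (fun z hz => (hv₂ z hz).2) ha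
  have hδ₂ : 0 < δ₂ := hδ₁.trans hδ₁₂
  set L := fun z => v₁ z / δ₁ - v₂ z / δ₂
  have hL : AntitoneOn L (Ico a b) := by
    refine antitoneOn_of_hasDerivWithinAt_nonpos (convex_Ico a b)
      (fun z hz => ((hv₁ z hz).2.continuousWithinAt.div_const _).sub
        ((hv₂ z hz).2.continuousWithinAt.div_const _))
      (f' := fun z => G z (v₁ z) - G z (v₂ z)) (fun z hz => ?_) (fun z hz => ?_)
    · have hz' := interior_subset hz
      exact ((((hv₁ z hz').2.div_const δ₁).sub ((hv₂ z hz').2.div_const δ₂)).mono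
        interior_subset).congr_deriv (by field_simp)
    · have hz' := interior_subset hz
      exact sub_nonpos.2 (hG_mono z hz' (hv₁ z hz').1 (hv₂ z hz').1 (hle z hz'))
  have hLa : 0 ≤ L a := by
    refine le_of_tendsto (by simpa using (hlim₁.div_const δ₁).sub (hlim₂.div_const δ₂)) ?_
    filter_upwards [Ioo_mem_nhdsLT hab] with z hz
    exact hL ⟨le_rfl, hab⟩ ⟨hz.1.le, hz.2⟩ hz.1.le
  have h₂ := (hv₂ a ⟨le_rfl, hab⟩).1
  have : v₁ a / δ₁ ≤ v₂ a / δ₁ := div_le_div_of_nonneg_right ha hδ₁.le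
  have : v₂ a / δ₁ < v₂ a / δ₂ := by
    rw [div_lt_div_iff₀ hδ₁ hδ₂]; nlinarith
  simp only [L] at hLa
  linarith

end Comparison

theorem strictMono_mul_exp_mul {ε : ℝ} (hε : ε = 1 ∨ ε = -1) :
    StrictMono fun s => ε * exp (ε * s) := by
  rcases hε with rfl | rfl
  · simpa using exp_strictMono
  · intro s s' h
    simpa using exp_lt_exp.2 (neg_lt_neg h)

theorem mul_log_sub_log_neg {ε a b : ℝ} (hε : ε = 1 ∨ ε = -1) (ha : 0 < a) (hb : 0 < b)
    (h : ε * (a - b) < 0) : ε * (log a - log b) < 0 := by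
  rcases hε with rfl | rfl
  · simpa using log_lt_log ha (by simpa using h)
  · simpa using log_lt_log hb (by linarith)

structure IsLVSaddle (α β A B : ℝ) : Prop where
  one_lt_α : 1 < α
  one_lt_β : 1 < β
  nullcline_x : A + α * B = 1
  nullcline_y : β * A + B = 1

namespace IsLVSaddle

variable {α β A B : ℝ}

theorem one_lt_mul (h : IsLVSaddle α β A B) : 1 < α * β := by
  nlinarith [h.one_lt_α, h.one_lt_β]

theorem mul_A (h : IsLVSaddle α β A B) : (α * β - 1) * A = α - 1 := by
  linear_combination α * h.nullcline_y - h.nullcline_x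

theorem mul_B (h : IsLVSaddle α β A B) : (α * β - 1) * B = β - 1 := by
  linear_combination β * h.nullcline_x - h.nullcline_y

theorem growth_x_eq (h : IsLVSaddle α β A B) (x y : ℝ) :
    1 - x - α * y = -(x - A) - α * (y - B) := by
  linear_combination -h.nullcline_x

theorem growth_y_eq (h : IsLVSaddle α β A B) (x y : ℝ) :
    1 - y - β * x = -(y - B) - β * (x - A) := by
  linear_combination -h.nullcline_y

theorem mul_growth_x_pos (h : IsLVSaddle α β A B) {ε x y : ℝ} (hxA : ε * (x - A) < 0)
    (hyB : ε * (y - B) < 0) : 0 < ε * (1 - x - α * y) := by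
  rw [h.growth_x_eq]
  nlinarith [h.one_lt_α]

theorem mul_growth_y_pos (h : IsLVSaddle α β A B) {ε x y : ℝ} (hxA : ε * (x - A) < 0)
    (hyB : ε * (y - B) < 0) : 0 < ε * (1 - y - β * x) := by
  rw [h.growth_y_eq]
  nlinarith [h.one_lt_β]

theorem pos_A (h : IsLVSaddle α β A B) : 0 < A :=
  pos_of_mul_pos_right (h.mul_A ▸ sub_pos.2 h.one_lt_α) (sub_nonneg.2 h.one_lt_mul.le)

theorem pos_B (h : IsLVSaddle α β A B) : 0 < B :=
  pos_of_mul_pos_right (h.mul_B ▸ sub_pos.2 h.one_lt_β) (sub_nonneg.2 h.one_lt_mul.le)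

end IsLVSaddle

noncomputable def lvSlope (α β x y : ℝ) : ℝ := (1 - y - β * x) / (x * (1 - x - α * y))

section Slope

variable {α β A B ε x y : ℝ}

theorem lvSlope_eq_mul_div (hε : ε ≠ 0) :
    lvSlope α β x y = ε * (1 - y - β * x) / (x * (ε * (1 - x - α * y))) := by
  rw [lvSlope, mul_left_comm, mul_div_mul_left _ _ hε]

theorem lvSlope_pos (hs : IsLVSaddle α β A B) (hx : 0 < x) (hxA : ε * (x - A) < 0)
    (hyB : ε * (y - B) < 0) : 0 < lvSlope α β x y := by
  have hε : ε ≠ 0 := by rintro rfl; simp at hxA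
  rw [lvSlope_eq_mul_div hε]
  exact div_pos (hs.mul_growth_y_pos hxA hyB) (mul_pos hx (hs.mul_growth_x_pos hxA hyB))

theorem lvSlope_le_lvSlope {y₁ y₂ : ℝ} (hs : IsLVSaddle α β A B) (hx : 0 < x)
    (hxA : ε * (x - A) < 0) (hy₁ : ε * (y₁ - B) < 0) (hy₂ : ε * (y₂ - B) < 0)
    (hy : ε * y₁ ≤ ε * y₂) : lvSlope α β x y₁ ≤ lvSlope α β x y₂ := by
  have hε : ε ≠ 0 := by rintro rfl; simp at hxA
  rw [lvSlope_eq_mul_div hε, lvSlope_eq_mul_div hε,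
    div_le_div_iff₀ (mul_pos hx (hs.mul_growth_x_pos hxA hy₁))
      (mul_pos hx (hs.mul_growth_x_pos hxA hy₂))]
  have key : ε * (1 - y₂ - β * x) * (ε * (1 - x - α * y₁))
      - ε * (1 - y₁ - β * x) * (ε * (1 - x - α * y₂))
      = (α * β - 1) * -(ε * (x - A)) * (ε * y₂ - ε * y₁) := by
    linear_combination -(ε * ε) * (y₂ - y₁) * hs.mul_A
  have : 0 ≤ (α * β - 1) * -(ε * (x - A)) * (ε * y₂ - ε * y₁) :=
    mul_nonneg (mul_nonneg (sub_nonneg.2 hs.one_lt_mul.le) (by linarith)) (by linarith)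
  nlinarith

-- `(dw/dt) / (dq/dt)` for `q = ε (x - A)` and `w = ε (log y - log B)`.
theorem div_eq_lvSlope (hε : ε ≠ 0) (hy : y ≠ 0) {δ : ℝ} :
    ε * (δ * y * (1 - y - β * x) / y) * (ε * (x * (1 - x - α * y)))⁻¹ =
      δ * lvSlope α β x y := by
  simp only [lvSlope]
  field_simp

end Slope

-- In the coordinates `z = ε (x - A)`, `v = ε (log y - log B)` (so `x = A + ε z` and
-- `y = B exp (ε v)` for `ε = ±1`), an orbit satisfies `dv/dz = δ * separatrixSlope … z v`.
noncomputable def separatrixSlope (α β A B ε z v : ℝ) : ℝ :=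
  lvSlope α β (A + ε * z) (B * exp (ε * v))

section SeparatrixSlope

variable {α β A B ε x₀ z : ℝ}

theorem pos_and_mul_sub_neg_of_mem_Ico (hs : IsLVSaddle α β A B) (hε : ε = 1 ∨ ε = -1)
    (hx₀ : 0 < x₀) (hz : z ∈ Ico (ε * (x₀ - A)) 0) : 0 < A + ε * z ∧ ε * (A + ε * z - A) < 0 := by
  have := hs.pos_A
  rcases hε with rfl | rfl <;> constructor <;> linarith [hz.1, hz.2]

theorem mul_mul_exp_sub_neg (hε : ε = 1 ∨ ε = -1) (hB : 0 < B) {v : ℝ} (hv : v < 0) :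
    ε * (B * exp (ε * v) - B) < 0 := by
  have := strictMono_mul_exp_mul hε hv
  simp only [mul_zero, exp_zero, mul_one] at this
  nlinarith

theorem separatrixSlope_pos (hs : IsLVSaddle α β A B) (hε : ε = 1 ∨ ε = -1) (hx₀ : 0 < x₀)
    (hz : z ∈ Ico (ε * (x₀ - A)) 0) {v : ℝ} (hv : v < 0) : 0 < separatrixSlope α β A B ε z v :=
  have hX := pos_and_mul_sub_neg_of_mem_Ico hs hε hx₀ hz
  lvSlope_pos hs hX.1 hX.2 (mul_mul_exp_sub_neg hε hs.pos_B hv)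

theorem monotoneOn_separatrixSlope (hs : IsLVSaddle α β A B) (hε : ε = 1 ∨ ε = -1)
    (hx₀ : 0 < x₀) (hz : z ∈ Ico (ε * (x₀ - A)) 0) :
    MonotoneOn (separatrixSlope α β A B ε z) (Iio 0) := by
  intro v₁ hv₁ v₂ hv₂ hv
  have hX := pos_and_mul_sub_neg_of_mem_Ico hs hε hx₀ hz
  refine lvSlope_le_lvSlope hs hX.1 hX.2 (mul_mul_exp_sub_neg hε hs.pos_B hv₁)
    (mul_mul_exp_sub_neg hε hs.pos_B hv₂) ?_
  have := (strictMono_mul_exp_mul hε).monotone hv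
  nlinarith [hs.pos_B]

end SeparatrixSlope

noncomputable def lvLyapunov (α β δ x y : ℝ) : ℝ := (1 + β) * log x - (α + 1) / δ * log y

theorem lvLyapunov_lt_lvLyapunov {α β δ x y x' y' : ℝ} (hα : -1 < α) (hβ : -1 < β) (hδ : 0 < δ)
    (hx : 0 < x) (hy' : 0 < y') (hxx' : x ≤ x') (hyy' : y' ≤ y) (hne : x ≠ x' ∨ y ≠ y') :
    lvLyapunov α β δ x y < lvLyapunov α β δ x' y' := by
  have hc₁ : 0 < 1 + β := by linarith
  have hc₂ : 0 < (α + 1) / δ := div_pos (by linarith) hδ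
  have h₁ := mul_le_mul_of_nonneg_left (log_le_log hx hxx') hc₁.le
  have h₂ := mul_le_mul_of_nonneg_left (log_le_log hy' hyy') hc₂.le
  rcases hne with hne | hne
  · have := mul_lt_mul_of_pos_left (log_lt_log hx (lt_of_le_of_ne hxx' hne)) hc₁
    simp only [lvLyapunov]; linarith
  · have := mul_lt_mul_of_pos_left (log_lt_log hy' (lt_of_le_of_ne hyy' hne.symm)) hc₂
    simp only [lvLyapunov]; linarith

structure IsLVSolution (α β δ : ℝ) (x y : ℝ → ℝ) : Prop where
  hasDerivWithinAt_x :
    ∀ t ∈ Ici (0 : ℝ), HasDerivWithinAt x (x t * (1 - x t - α * y t)) (Ici 0) t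
  hasDerivWithinAt_y :
    ∀ t ∈ Ici (0 : ℝ), HasDerivWithinAt y (δ * y t * (1 - y t - β * x t)) (Ici 0) t

namespace IsLVSolution

variable {α β δ A B : ℝ} {x y : ℝ → ℝ}

theorem continuousOn_x (h : IsLVSolution α β δ x y) : ContinuousOn x (Ici 0) :=
  fun t ht => (h.hasDerivWithinAt_x t ht).continuousWithinAt

theorem continuousOn_y (h : IsLVSolution α β δ x y) : ContinuousOn y (Ici 0) :=
  fun t ht => (h.hasDerivWithinAt_y t ht).continuousWithinAt

theorem pos_x (h : IsLVSolution α β δ x y) (h0 : 0 < x 0) : ∀ t ∈ Ici (0 : ℝ), 0 < x t :=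
  pos_of_hasDerivWithinAt_mul ((continuousOn_const.sub h.continuousOn_x).sub
    (continuousOn_const.mul h.continuousOn_y)) h.hasDerivWithinAt_x h0

theorem pos_y (h : IsLVSolution α β δ x y) (h0 : 0 < y 0) : ∀ t ∈ Ici (0 : ℝ), 0 < y t :=
  pos_of_hasDerivWithinAt_mul (g := fun t => δ * (1 - y t - β * x t))
    (continuousOn_const.mul ((continuousOn_const.sub h.continuousOn_y).sub
      (continuousOn_const.mul h.continuousOn_x)))
    (fun t ht => (h.hasDerivWithinAt_y t ht).congr_deriv (by ring)) h0

theorem eq_saddle_of_eq_saddle (hs : IsLVSaddle α β A B) (h : IsLVSolution α β δ x y) {τ : ℝ}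
    (hτ : 0 ≤ τ) (hx : x τ = A) (hy : y τ = B) : x 0 = A ∧ y 0 = B := by
  have := eq_of_hasDerivWithinAt_of_apply_eq_zero
    (F := fun p : ℝ × ℝ => (p.1 * (1 - p.1 - α * p.2), δ * p.2 * (1 - p.2 - β * p.1)))
    (f := fun t => (x t, y t)) (c := (A, B)) (by fun_prop)
    (by simp [hs.growth_x_eq, hs.growth_y_eq])
    (fun t ht => (h.hasDerivWithinAt_x t ht).prodMk (h.hasDerivWithinAt_y t ht)) hτ
    (by simp [hx, hy])
  simpa using this

theorem hasDerivWithinAt_lvLyapunov (hs : IsLVSaddle α β A B) (h : IsLVSolution α β δ x y)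
    (hδ : δ ≠ 0) {t : ℝ} (ht : t ∈ Ici 0) (hx : 0 < x t) (hy : 0 < y t) :
    HasDerivWithinAt (fun t => lvLyapunov α β δ (x t) (y t))
      ((α * β - 1) * ((x t - A) - (y t - B))) (Ici 0) t := by
  refine ((((h.hasDerivWithinAt_x t ht).log hx.ne').const_mul (1 + β)).sub
    (((h.hasDerivWithinAt_y t ht).log hy.ne').const_mul ((α + 1) / δ))).congr_deriv ?_
  field_simp
  linear_combination hs.mul_A - hs.mul_B

theorem quadrant_forward_invariant (hs : IsLVSaddle α β A B) (h : IsLVSolution α β δ x y)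
    (hδ : 0 < δ) (hne : ∀ t ∈ Ici (0 : ℝ), x t = A → y t ≠ B) {ε t₂ : ℝ} (hε : ε ≠ 0)
    (ht₂ : 0 ≤ t₂) (hx₂ : 0 ≤ ε * (x t₂ - A)) (hy₂ : ε * (y t₂ - B) ≤ 0) :
    ∀ t ∈ Ici t₂, 0 ≤ ε * (x t - A) ∧ ε * (y t - B) ≤ 0 := by
  have hsub : Ici t₂ ⊆ Ici (0 : ℝ) := Ici_subset_Ici.2 ht₂
  have hx_eq : ∀ t, ε * (x t - A) = 0 → x t = A := fun t hu =>
    sub_eq_zero.1 ((mul_eq_zero.1 hu).resolve_left hε)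
  have hy_eq : ∀ t, ε * (y t - B) = 0 → y t = B := fun t hw =>
    sub_eq_zero.1 ((mul_eq_zero.1 hw).resolve_left hε)
  refine nonneg_and_nonpos_of_inward
    (fun t ht => (((h.hasDerivWithinAt_x t (hsub ht)).sub_const A).const_mul ε).mono hsub)
    (fun t ht => (((h.hasDerivWithinAt_y t (hsub ht)).sub_const B).const_mul ε).mono hsub)
    (fun t ht hu => mul_ne_zero hε (sub_ne_zero.2 (hne t (hsub ht) (hx_eq t hu))))
    (fun t ht hu hw => ?_) (fun t ht hw hu => ?_) hx₂ hy₂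
  · rw [hx_eq t hu, hs.growth_x_eq]
    nlinarith [mul_pos (mul_pos hs.pos_A (by linarith [hs.one_lt_α] : (0 : ℝ) < α))
      (neg_pos.2 hw)]
  · rw [hy_eq t hw, hs.growth_y_eq]
    nlinarith [mul_pos (mul_pos (mul_pos hδ hs.pos_B) (by linarith [hs.one_lt_β] : (0 : ℝ) < β))
      hu]

theorem monotoneOn_mul_lvLyapunov (hs : IsLVSaddle α β A B) (h : IsLVSolution α β δ x y)
    (hδ : 0 < δ) (hx : ∀ t ∈ Ici (0 : ℝ), 0 < x t) (hy : ∀ t ∈ Ici (0 : ℝ), 0 < y t)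
    {ε t₂ : ℝ} (ht₂ : 0 ≤ t₂) (hQ : ∀ t ∈ Ici t₂, 0 ≤ ε * (x t - A) ∧ ε * (y t - B) ≤ 0) :
    MonotoneOn (fun t => ε * lvLyapunov α β δ (x t) (y t)) (Ici t₂) := by
  have hsub : Ici t₂ ⊆ Ici (0 : ℝ) := Ici_subset_Ici.2 ht₂
  have hE : ∀ t ∈ Ici t₂, HasDerivWithinAt (fun t => ε * lvLyapunov α β δ (x t) (y t))
      (ε * ((α * β - 1) * ((x t - A) - (y t - B)))) (Ici 0) t := fun t ht =>
    (h.hasDerivWithinAt_lvLyapunov hs hδ.ne' (hsub ht) (hx t (hsub ht))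
      (hy t (hsub ht))).const_mul ε
  refine monotoneOn_of_hasDerivWithinAt_nonneg (convex_Ici t₂)
    (fun t ht => (hE t ht).continuousWithinAt.mono hsub)
    (fun t ht => (hE t (interior_subset ht)).mono (interior_subset.trans hsub)) fun t ht => ?_
  have := hQ t (interior_subset ht)
  have := hs.one_lt_mul
  nlinarith

theorem mul_pos_of_tendsto (hs : IsLVSaddle α β A B) (h : IsLVSolution α β δ x y)
    (hδ : 0 < δ) (hx0 : 0 < x 0) (hy0 : 0 < y 0)
    (hconv : Tendsto (fun t => (x t, y t)) atTop (𝓝 (A, B))) (hx0A : x 0 ≠ A) :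
    ∀ t ∈ Ici (0 : ℝ), 0 < (x t - A) * (y t - B) := by
  intro t₂ ht₂
  by_contra! hprod
  have hx := h.pos_x hx0
  have hy := h.pos_y hy0
  have hne : ∀ t ∈ Ici (0 : ℝ), x t = A → y t ≠ B := fun t ht hxt hyt =>
    hx0A (h.eq_saddle_of_eq_saddle hs ht hxt hyt).1
  obtain ⟨ε, hε, hx₂, hy₂⟩ :
      ∃ ε : ℝ, (ε = 1 ∨ ε = -1) ∧ 0 ≤ ε * (x t₂ - A) ∧ ε * (y t₂ - B) ≤ 0 := by
    rcases mul_nonpos_iff.1 hprod with h' | h'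
    · exact ⟨1, Or.inl rfl, by linarith, by linarith⟩
    · exact ⟨-1, Or.inr rfl, by linarith, by linarith⟩
  have hmono := h.monotoneOn_mul_lvLyapunov hs hδ hx hy ht₂ <|
    h.quadrant_forward_invariant hs hδ hne (by rcases hε with rfl | rfl <;> norm_num) ht₂ hx₂ hy₂
  have hlim : Tendsto (fun t => ε * lvLyapunov α β δ (x t) (y t)) atTop
      (𝓝 (ε * lvLyapunov α β δ A B)) :=
    ((((continuousAt_log hs.pos_A.ne').tendsto.comp hconv.fst_nhds).const_mul (1 + β)).sub
      (((continuousAt_log hs.pos_B.ne').tendsto.comp hconv.snd_nhds).const_mul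
        ((α + 1) / δ))).const_mul ε
  have hstart : ε * lvLyapunov α β δ A B < ε * lvLyapunov α β δ (x t₂) (y t₂) := by
    have hne' : x t₂ ≠ A ∨ y t₂ ≠ B := not_and_or.1 fun ⟨h₁, h₂⟩ => hne t₂ ht₂ h₁ h₂
    have hα : -1 < α := by linarith [hs.one_lt_α]
    have hβ : -1 < β := by linarith [hs.one_lt_β]
    rcases hε with rfl | rfl
    · simpa using lvLyapunov_lt_lvLyapunov hα hβ hδ hs.pos_A (hy t₂ ht₂) (by linarith)
        (by linarith) (hne'.imp Ne.symm Ne.symm)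
    · simpa using lvLyapunov_lt_lvLyapunov hα hβ hδ (hx t₂ ht₂) hs.pos_B (by linarith)
        (by linarith) hne'
  exact hstart.not_ge (ge_of_tendsto hlim (eventually_atTop.2
    ⟨t₂, fun t ht => hmono self_mem_Ici ht ht⟩))

theorem mul_sub_neg_of_tendsto (hs : IsLVSaddle α β A B) (h : IsLVSolution α β δ x y) (hδ : 0 < δ)
    (hx0 : 0 < x 0) (hy0 : 0 < y 0) (hconv : Tendsto (fun t => (x t, y t)) atTop (𝓝 (A, B)))
    {ε : ℝ} (hε : ε * ε = 1) (hx0A : ε * (x 0 - A) < 0) :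
    ∀ t ∈ Ici (0 : ℝ), ε * (x t - A) < 0 ∧ ε * (y t - B) < 0 := by
  have hprod := h.mul_pos_of_tendsto hs hδ hx0 hy0 hconv fun hA => by simp [hA] at hx0A
  intro t ht
  have hxt : ε * (x t - A) < 0 := by
    by_contra! hxt
    obtain ⟨s, hs', hs0⟩ := intermediate_value_Icc (f := fun s => ε * (x s - A)) (mem_Ici.1 ht)
      ((continuousOn_const.mul (h.continuousOn_x.sub continuousOn_const)).mono
        Icc_subset_Ici_self) ⟨hx0A.le, hxt⟩
    have := hprod s hs'.1
    have hε0 : ε ≠ 0 := by rintro rfl; simp at hε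
    rw [sub_eq_zero.1 ((mul_eq_zero.1 hs0).resolve_left hε0), sub_self, zero_mul] at this
    exact lt_irrefl 0 this
  refine ⟨hxt, neg_of_mul_pos_right ?_ hxt.le⟩
  calc 0 < (x t - A) * (y t - B) := hprod t ht
    _ = ε * (x t - A) * (ε * (y t - B)) := by linear_combination (-(x t - A) * (y t - B)) * hε

theorem exists_separatrix (hs : IsLVSaddle α β A B) (h : IsLVSolution α β δ x y) (hδ : 0 < δ)
    (hx0 : 0 < x 0) (hy0 : 0 < y 0) (hconv : Tendsto (fun t => (x t, y t)) atTop (𝓝 (A, B)))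
    {ε : ℝ} (hε : ε = 1 ∨ ε = -1) (hx0A : ε * (x 0 - A) < 0) :
    ∃ v : ℝ → ℝ, v (ε * (x 0 - A)) = ε * (log (y 0) - log B) ∧ Tendsto v (𝓝[<] 0) (𝓝 0) ∧
      ∀ z ∈ Ico (ε * (x 0 - A)) 0, v z < 0 ∧
        HasDerivWithinAt v (δ * separatrixSlope α β A B ε z (v z))
          (Ico (ε * (x 0 - A)) 0) z := by
  have hεε : ε * ε = 1 := by rcases hε with rfl | rfl <;> norm_num
  have hc := h.mul_sub_neg_of_tendsto hs hδ hx0 hy0 hconv hεε hx0A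
  have hx := h.pos_x hx0
  have hy := h.pos_y hy0
  have hM : ∀ t ∈ Ici (0 : ℝ), 0 < ε * (1 - x t - α * y t) := fun t ht =>
    hs.mul_growth_x_pos (hc t ht).1 (hc t ht).2
  have hq' : ∀ t ∈ Ici (0 : ℝ), 0 < ε * (x t * (1 - x t - α * y t)) := fun t ht => by
    rw [mul_left_comm]
    exact mul_pos (hx t ht) (hM t ht)
  obtain ⟨ξ, hξ0, hξlim, hξ⟩ := exists_inverse_of_hasDerivWithinAt_pos (q := fun t => ε * (x t - A))
    (fun t ht => ((h.hasDerivWithinAt_x t ht).sub_const A).const_mul ε) hq'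
    (by simpa using (hconv.fst_nhds.sub_const A).const_mul ε)
  set w := fun t => ε * (log (y t) - log B)
  have hw : ∀ t ∈ Ici (0 : ℝ), HasDerivWithinAt w
      (ε * (δ * y t * (1 - y t - β * x t) / y t)) (Ici 0) t := fun t ht =>
    (((h.hasDerivWithinAt_y t ht).log (hy t ht).ne').sub_const (log B)).const_mul ε
  refine ⟨w ∘ ξ, by simp only [Function.comp_apply, hξ0, w], ?_, fun z hz => ?_⟩
  · simpa [w] using ((((continuousAt_log hs.pos_B.ne').tendsto.comp hconv.snd_nhds).sub_const
      (log B)).const_mul ε).comp hξlim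
  obtain ⟨ht, hqt, hξd⟩ := hξ z hz
  set t := ξ z
  refine ⟨mul_log_sub_log_neg hε (hy t ht) hs.pos_B (hc t ht).2, ?_⟩
  have hX : A + ε * z = x t := by rw [← hqt]; linear_combination (x t - A) * hεε
  have hY : B * exp (ε * w t) = y t := by
    simp only [w, ← mul_assoc, hεε, one_mul, exp_sub, exp_log (hy t ht), exp_log hs.pos_B]
    field_simp [hs.pos_B.ne']
  rw [separatrixSlope, Function.comp_apply, hY, hX]
  exact ((hw t ht).comp z hξd fun z' hz' => (hξ z' hz').1).congr_deriv <|
    div_eq_lvSlope (left_ne_zero_of_mul (hM t ht).ne') (hy t ht).ne'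

theorem mul_log_lt_of_rate_lt (hs : IsLVSaddle α β A B) {δ₁ δ₂ : ℝ} {x₁ y₁ x₂ y₂ : ℝ → ℝ}
    (h₁ : IsLVSolution α β δ₁ x₁ y₁) (h₂ : IsLVSolution α β δ₂ x₂ y₂) (hδ₁ : 0 < δ₁)
    (hδ₁₂ : δ₁ < δ₂) (hx : x₂ 0 = x₁ 0) (hx0 : 0 < x₁ 0) (hy₁ : 0 < y₁ 0) (hy₂ : 0 < y₂ 0)
    (hconv₁ : Tendsto (fun t => (x₁ t, y₁ t)) atTop (𝓝 (A, B)))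
    (hconv₂ : Tendsto (fun t => (x₂ t, y₂ t)) atTop (𝓝 (A, B)))
    {ε : ℝ} (hε : ε = 1 ∨ ε = -1) (hx0A : ε * (x₁ 0 - A) < 0) :
    ε * (log (y₂ 0) - log B) < ε * (log (y₁ 0) - log B) := by
  obtain ⟨v₁, hv₁0, hlim₁, hv₁⟩ := h₁.exists_separatrix hs hδ₁ hx0 hy₁ hconv₁ hε hx0A
  obtain ⟨v₂, hv₂0, hlim₂, hv₂⟩ := h₂.exists_separatrix hs (hδ₁.trans hδ₁₂) (hx ▸ hx0) hy₂
    hconv₂ hε (hx ▸ hx0A)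
  rw [hx] at hv₂0 hv₂
  rw [← hv₁0, ← hv₂0]
  exact lt_of_hasDerivWithinAt_of_rate_lt hx0A hδ₁ hδ₁₂
    (fun z hz v hv => separatrixSlope_pos hs hε hx0 hz hv)
    (fun z hz => monotoneOn_separatrixSlope hs hε hx0 hz) hv₁ hv₂ hlim₁ hlim₂

end IsLVSolution

/-- Dependence of the separatrix on `δ`: if `0 < δ₁ < δ₂` and `(x₀, yᵢ)` lies
on the stable manifold of the saddle `(A,B)` for the system with parameter
`δᵢ`, then `y₂ < y₁` when `0 < x₀ < A`, and `y₁ < y₂` when `x₀ > A`. -/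
theorem stmt_17 (α β : ℝ) (hα : 1 < α) (hβ : 1 < β)
    (A B : ℝ) (hA : A = (α - 1) / (α * β - 1)) (hB : B = (β - 1) / (α * β - 1))
    (δ₁ δ₂ : ℝ) (hδ₁ : 0 < δ₁) (hδ₁₂ : δ₁ < δ₂)
    (x₀ : ℝ) (hx₀ : 0 < x₀)
    (y₁ y₂ : ℝ) (hy₁ : 0 < y₁) (hy₂ : 0 < y₂)
    (x1 Y1 : ℝ → ℝ)
    (hx1 : ∀ t ∈ Set.Ici (0 : ℝ),
      HasDerivWithinAt x1 (x1 t * (1 - x1 t - α * Y1 t)) (Set.Ici 0) t)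
    (hY1 : ∀ t ∈ Set.Ici (0 : ℝ),
      HasDerivWithinAt Y1 (δ₁ * Y1 t * (1 - Y1 t - β * x1 t)) (Set.Ici 0) t)
    (hx10 : x1 0 = x₀) (hY10 : Y1 0 = y₁)
    (hconv1 : Tendsto (fun t => (x1 t, Y1 t)) atTop (nhds (A, B)))
    (x2 Y2 : ℝ → ℝ)
    (hx2 : ∀ t ∈ Set.Ici (0 : ℝ),
      HasDerivWithinAt x2 (x2 t * (1 - x2 t - α * Y2 t)) (Set.Ici 0) t)
    (hY2 : ∀ t ∈ Set.Ici (0 : ℝ),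
      HasDerivWithinAt Y2 (δ₂ * Y2 t * (1 - Y2 t - β * x2 t)) (Set.Ici 0) t)
    (hx20 : x2 0 = x₀) (hY20 : Y2 0 = y₂)
    (hconv2 : Tendsto (fun t => (x2 t, Y2 t)) atTop (nhds (A, B))) :
    (x₀ < A → y₂ < y₁) ∧ (A < x₀ → y₁ < y₂) := by
  have hq : α * β - 1 ≠ 0 := by nlinarith
  have hA' : (α * β - 1) * A = α - 1 := by rw [hA]; field_simp
  have hB' : (α * β - 1) * B = β - 1 := by rw [hB]; field_simp
  have hs : IsLVSaddle α β A B :=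
    ⟨hα, hβ, mul_left_cancel₀ hq (by linear_combination hA' + α * hB'),
      mul_left_cancel₀ hq (by linear_combination β * hA' + hB')⟩
  have key := fun (ε : ℝ) (hε : ε = 1 ∨ ε = -1) =>
    IsLVSolution.mul_log_lt_of_rate_lt hs ⟨hx1, hY1⟩ ⟨hx2, hY2⟩ hδ₁ hδ₁₂ (hx20.trans hx10.symm)
      (hx10 ▸ hx₀) (hY10 ▸ hy₁) (hY20 ▸ hy₂) hconv1 hconv2 hε
  simp only [hx10, hY10, hY20] at key
  refine ⟨fun hx => ?_, fun hx => ?_⟩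
  · have := key 1 (Or.inl rfl) (by linarith)
    exact (log_lt_log_iff hy₂ hy₁).1 (by linarith)
  · have := key (-1) (Or.inr rfl) (by linarith)
    exact (log_lt_log_iff hy₁ hy₂).1 (by linarith)
end

section
/- Fix α>1, β>1 and set A=(α−1)/(αβ−1), B=(β−1)/(αβ−1). For δ>0 and x₀>0 let s(x₀,δ)>0 denote the unique value such that the solution of the system dx/dt = x(1−x−αy), dy/dt = δy(1−y−βx) on [0,∞) with initial condition (x₀,s(x₀,δ)) converges to (A,B) as t→∞. Then for every fixed x₀>0, s(x₀,δ) → B as δ→0⁺; that is, as δ→0 the separatrix converges pointwise to the horizontal line y=B. -/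
/-! For small `δ` the variable `y` is slow while `x` relaxes on a time scale independent of `δ`.
Suppose `y 0 ≥ c > B` while `y → B`, and let `E` be the first time `y` reaches a level
`b ∈ (B, c)`. Up to time `E` we have `y ≥ b`, so `x` is dominated by a logistic equation whose
equilibrium `1 - α b` lies left of the `y`-nullcline `β x = 1 - c` (for `b`, `c` close to `B` this
is where `α β > 1` enters). Hence after a time `T₀` independent of `δ`, `x` stays left of that
nullcline. If `E ≤ T₀`, then `y` fell from `c` to `b` within time `T₀`, impossible for small `δ`
since `1 / y` drifts at rate `O(δ)`; if `E > T₀`, then from `T₀` on `y` increases whenever it lies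
in `(b, c]`, so it never reaches `b`. The lower bound is symmetric. -/

open Filter Set Real Topology

theorem image_ge_of_deriv_right_gt_deriv_boundary {f f' : ℝ → ℝ} {a b : ℝ}
    (hf : ContinuousOn f (Icc a b)) (hf' : ∀ t ∈ Ico a b, HasDerivWithinAt f (f' t) (Ici t) t)
    {B B' : ℝ → ℝ} (ha : B a ≤ f a) (hB : ∀ t, HasDerivAt B (B' t) t)
    (bound : ∀ t ∈ Ico a b, f t = B t → B' t < f' t) : ∀ ⦃t⦄, t ∈ Icc a b → B t ≤ f t := by
  intro t ht
  have := image_le_of_deriv_right_lt_deriv_boundary hf.neg (fun t ht => (hf' t ht).neg)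
    (B := fun t => -B t) (neg_le_neg ha) (fun t => (hB t).neg)
    (fun t ht hEq => neg_lt_neg (bound t ht (neg_injective hEq))) ht
  exact neg_le_neg_iff.1 this

theorem exists_first_eq_of_lt_of_le {f : ℝ → ℝ} {a T b : ℝ} (hf : ContinuousOn f (Icc a T))
    (haT : a ≤ T) (ha : b < f a) (hT : f T ≤ b) :
    ∃ E ∈ Icc a T, f E = b ∧ ∀ t ∈ Ico a E, b < f t := by
  set S := Icc a T ∩ f ⁻¹' Iic b
  have hSbdd : BddBelow S := ⟨a, fun t ht => ht.1.1⟩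
  have hE : sInf S ∈ S := (hf.preimage_isClosed_of_isClosed isClosed_Icc isClosed_Iic).csInf_mem
    ⟨T, right_mem_Icc.2 haT, hT⟩ hSbdd
  have hbefore : ∀ t ∈ Ico a (sInf S), b < f t := fun t ht => not_le.1 fun hle =>
    ht.2.not_ge (csInf_le hSbdd ⟨⟨ht.1, ht.2.le.trans hE.1.2⟩, hle⟩)
  refine ⟨sInf S, hE.1, le_antisymm hE.2 (not_lt.1 fun hlt => ?_), hbefore⟩
  -- a crossing of level `b` before `sInf S` would be an earlier point of `S`
  obtain ⟨c, hc, hfc⟩ := intermediate_value_Icc' hE.1.1 (hf.mono (Icc_subset_Icc_right hE.1.2))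
    ⟨hlt.le, ha.le⟩
  rcases hc.2.lt_or_eq with hcE | rfl
  · exact (hbefore c ⟨hc.1, hcE⟩).ne' hfc
  · exact hlt.ne hfc

theorem exists_first_eq_of_gt_of_ge {f : ℝ → ℝ} {a T b : ℝ} (hf : ContinuousOn f (Icc a T))
    (haT : a ≤ T) (ha : f a < b) (hT : b ≤ f T) :
    ∃ E ∈ Icc a T, f E = b ∧ ∀ t ∈ Ico a E, f t < b := by
  obtain ⟨E, hE, hfE, hbefore⟩ :=
    exists_first_eq_of_lt_of_le hf.neg haT (neg_lt_neg ha) (neg_le_neg hT)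
  exact ⟨E, hE, neg_injective hfE, fun t ht => neg_lt_neg_iff.1 (hbefore t ht)⟩

theorem hasDerivAt_const_add_mul_exp (p M k t : ℝ) :
    HasDerivAt (fun t => p + M * exp (-k * t)) (-k * (M * exp (-k * t))) t :=
  ((((hasDerivAt_id t).const_mul (-k)).exp.const_mul M).const_add p).congr_deriv
    (by simp only [id, mul_one]; ring)

structure IsCompetitionTrajectory (α β δ : ℝ) (x y : ℝ → ℝ) : Prop where
  hasDerivWithinAt_x :
    ∀ t ∈ Ici (0 : ℝ), HasDerivWithinAt x (x t * (1 - x t - α * y t)) (Ici 0) t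
  hasDerivWithinAt_y :
    ∀ t ∈ Ici (0 : ℝ), HasDerivWithinAt y (δ * y t * (1 - y t - β * x t)) (Ici 0) t

namespace IsCompetitionTrajectory

variable {α β δ : ℝ} {x y : ℝ → ℝ}

theorem hasDerivWithinAt_x_Ici (h : IsCompetitionTrajectory α β δ x y) {t : ℝ} (ht : 0 ≤ t) :
    HasDerivWithinAt x (x t * (1 - x t - α * y t)) (Ici t) t :=
  (h.hasDerivWithinAt_x t ht).mono (Ici_subset_Ici.2 ht)

theorem hasDerivWithinAt_y_Ici (h : IsCompetitionTrajectory α β δ x y) {t : ℝ} (ht : 0 ≤ t) :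
    HasDerivWithinAt y (δ * y t * (1 - y t - β * x t)) (Ici t) t :=
  (h.hasDerivWithinAt_y t ht).mono (Ici_subset_Ici.2 ht)

theorem continuousOn_x (h : IsCompetitionTrajectory α β δ x y) {a b : ℝ} (ha : 0 ≤ a) :
    ContinuousOn x (Icc a b) := fun t ht =>
  (h.hasDerivWithinAt_x t (ha.trans ht.1)).continuousWithinAt.mono
    (Icc_subset_Ici_self.trans (Ici_subset_Ici.2 ha))

theorem continuousOn_y (h : IsCompetitionTrajectory α β δ x y) {a b : ℝ} (ha : 0 ≤ a) :
    ContinuousOn y (Icc a b) := fun t ht =>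
  (h.hasDerivWithinAt_y t (ha.trans ht.1)).continuousWithinAt.mono
    (Icc_subset_Ici_self.trans (Ici_subset_Ici.2 ha))

/-- While `y ≥ b`, the `x`-equation is dominated by the logistic equation with capacity
`1 - α b`, whose solutions approach it at rate `1 - α b`. -/
theorem x_le_of_le_y (h : IsCompetitionTrajectory α β δ x y) {b E : ℝ} (hα : 0 ≤ α)
    (hp : 0 ≤ 1 - α * b) (hx0 : 0 < x 0) (hy : ∀ t ∈ Ico 0 E, b ≤ y t) :
    ∀ t ∈ Icc 0 E, x t ≤ 1 - α * b + x 0 * exp (-(1 - α * b) * t) := by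
  refine image_le_of_deriv_right_lt_deriv_boundary (h.continuousOn_x le_rfl)
    (fun t ht => h.hasDerivWithinAt_x_Ici ht.1) (by simpa using hp)
    (fun t => hasDerivAt_const_add_mul_exp _ _ _ t) fun t ht hxt => ?_
  have hpx : 1 - α * b < x t := by rw [hxt]; have := exp_pos (-(1 - α * b) * t); nlinarith
  have hαy : x t * (α * b) ≤ x t * (α * y t) :=
    mul_le_mul_of_nonneg_left (mul_le_mul_of_nonneg_left (hy t ht) hα) (hp.trans hpx.le)
  have hgap : x 0 * exp (-(1 - α * b) * t) = x t - (1 - α * b) := by linarith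
  rw [hgap]
  nlinarith [sq_pos_of_pos (sub_pos.2 hpx)]

theorem le_x_of_y_le (h : IsCompetitionTrajectory α β δ x y) {b E m k : ℝ} (hα : 0 ≤ α)
    (hk : 0 ≤ k) (hkm : k < m) (hmp : m < 1 - α * b) (hmx : m ≤ x 0)
    (hy : ∀ t ∈ Ico 0 E, y t ≤ b) :
    ∀ t ∈ Icc 0 E, 1 - α * b + -(1 - α * b - m) * exp (-k * t) ≤ x t := by
  refine image_ge_of_deriv_right_gt_deriv_boundary (h.continuousOn_x le_rfl)
    (fun t ht => h.hasDerivWithinAt_x_Ici ht.1) (by simpa using hmx)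
    (fun t => hasDerivAt_const_add_mul_exp _ _ _ t) fun t ht hxt => ?_
  have hexp_pos := exp_pos (-k * t)
  have hexp_le : exp (-k * t) ≤ 1 := exp_le_one_iff.2 (by nlinarith [ht.1])
  have hgap : (1 - α * b - m) * exp (-k * t) = 1 - α * b - x t := by linarith
  have hxp : x t < 1 - α * b := by nlinarith
  have hmx' : m ≤ x t := by nlinarith
  have hαy : x t * (α * y t) ≤ x t * (α * b) :=
    mul_le_mul_of_nonneg_left (mul_le_mul_of_nonneg_left (hy t ht) hα) (by linarith)
  have : -k * (-(1 - α * b - m) * exp (-k * t)) = k * (1 - α * b - x t) := by rw [← hgap]; ring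
  rw [this]
  nlinarith [mul_pos (sub_pos.2 (hkm.trans_le hmx')) (sub_pos.2 hxp)]

theorem le_y_of_x_lt (h : IsCompetitionTrajectory α β δ x y) {s E K : ℝ} (hδ : 0 < δ)
    (hs : 0 ≤ s) (hK : 0 < K) (hKs : K ≤ y s) (hx : ∀ t ∈ Ico s E, β * x t < 1 - K) :
    ∀ t ∈ Icc s E, K ≤ y t :=
  image_ge_of_deriv_right_gt_deriv_boundary (h.continuousOn_y hs)
    (fun t ht => h.hasDerivWithinAt_y_Ici (hs.trans ht.1)) hKs (fun _ => hasDerivAt_const _ _)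
    fun t ht hyt => by
      rw [hyt]
      exact mul_pos (mul_pos hδ hK) (by linarith [hx t ht])

theorem y_le_of_lt_x (h : IsCompetitionTrajectory α β δ x y) {s E K : ℝ} (hδ : 0 < δ)
    (hs : 0 ≤ s) (hK : 0 < K) (hKs : y s ≤ K) (hx : ∀ t ∈ Ico s E, 1 - K < β * x t) :
    ∀ t ∈ Icc s E, y t ≤ K :=
  image_le_of_deriv_right_lt_deriv_boundary (h.continuousOn_y hs)
    (fun t ht => h.hasDerivWithinAt_y_Ici (hs.trans ht.1)) hKs (fun _ => hasDerivAt_const _ _)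
    fun t ht hyt => by
      rw [hyt]
      exact mul_neg_of_pos_of_neg (mul_pos hδ hK) (by linarith [hx t ht])

/-- Bounding `1 / y` rather than `y` keeps the drift independent of the size of `y 0`. -/
theorem inv_y_le (h : IsCompetitionTrajectory α β δ x y) {b X E : ℝ} (hβ : 0 ≤ β) (hδ : 0 ≤ δ)
    (hb : 0 < b) (hX : 0 ≤ X) (hy : ∀ t ∈ Icc 0 E, b ≤ y t) (hx : ∀ t ∈ Icc 0 E, x t ≤ X) :
    ∀ t ∈ Icc 0 E, (y t)⁻¹ ≤ (y 0)⁻¹ + δ * (1 + β * X / b) * t := by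
  have hy0 : ∀ t ∈ Icc 0 E, 0 < y t := fun t ht => hb.trans_le (hy t ht)
  refine image_le_of_deriv_right_le_deriv_boundary
    (f' := fun t => -(δ * y t * (1 - y t - β * x t)) / y t ^ 2)
    (B := fun t => (y 0)⁻¹ + δ * (1 + β * X / b) * t)
    ((h.continuousOn_y le_rfl).inv₀ fun t ht => (hy0 t ht).ne')
    (fun t ht => (h.hasDerivWithinAt_y_Ici ht.1).inv (hy0 t (Ico_subset_Icc_self ht)).ne')
    (by simp) (by fun_prop)
    (fun t _ => by
      simpa using (((hasDerivAt_id t).const_mul (δ * (1 + β * X / b))).const_add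
        (y 0)⁻¹).hasDerivWithinAt)
    fun t ht => ?_
  have hyt := hy t (Ico_subset_Icc_self ht)
  have hypos := hy0 t (Ico_subset_Icc_self ht)
  have hβx : β * x t ≤ β * X / b * y t := calc
    β * x t ≤ β * X := mul_le_mul_of_nonneg_left (hx t (Ico_subset_Icc_self ht)) hβ
    _ = β * X / b * b := by field_simp
    _ ≤ β * X / b * y t := mul_le_mul_of_nonneg_left hyt (by positivity)
  calc -(δ * y t * (1 - y t - β * x t)) / y t ^ 2 = δ * (y t - 1 + β * x t) / y t := by
        field_simp; ring
    _ ≤ δ * ((1 + β * X / b) * y t) / y t := by gcongr; linarith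
    _ = δ * (1 + β * X / b) := by field_simp

theorem y_le_add_mul (h : IsCompetitionTrajectory α β δ x y) {E : ℝ} (hβ : 0 ≤ β) (hδ : 0 < δ)
    (hy0 : 0 < y 0) (hx : ∀ t ∈ Ico 0 E, 0 ≤ x t) : ∀ t ∈ Icc 0 E, y t ≤ y 0 + δ * t := by
  refine image_le_of_deriv_right_lt_deriv_boundary (h.continuousOn_y le_rfl)
    (fun t ht => h.hasDerivWithinAt_y_Ici ht.1) (by simp)
    (fun t => by simpa using ((hasDerivAt_id t).const_mul δ).const_add (y 0)) fun t ht hyt => ?_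
  have hypos : 0 < y t := by rw [hyt]; nlinarith [ht.1]
  have hlogistic : y t * (1 - y t - β * x t) < 1 := by
    nlinarith [mul_nonneg hypos.le (mul_nonneg hβ (hx t ht)), sq_nonneg (y t - 1 / 2)]
  calc δ * y t * (1 - y t - β * x t) = δ * (y t * (1 - y t - β * x t)) := by ring
    _ < δ * 1 := mul_lt_mul_of_pos_left hlogistic hδ
    _ = δ := mul_one δ

end IsCompetitionTrajectory

section Separatrix

variable {α β A B : ℝ}

theorem eventually_y_lt_of_exists_y_le (hα : 0 ≤ α) (hβ : 0 ≤ β) {x₀ b c : ℝ} (hx₀ : 0 < x₀)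
    (hb : 0 < b) (hbc : b < c) (hp : 0 < 1 - α * b) (hpc : β * (1 - α * b) < 1 - c) :
    ∀ᶠ δ in 𝓝[>] 0, ∀ x y : ℝ → ℝ, IsCompetitionTrajectory α β δ x y → x 0 = x₀ →
      (∃ T ≥ 0, y T ≤ b) → y 0 < c := by
  set p := 1 - α * b
  obtain ⟨T₀, hT₀, hT₀0⟩ : ∃ T₀, β * (p + x₀ * exp (-p * T₀)) < 1 - c ∧ 0 ≤ T₀ := by
    have hlim : Tendsto (fun t => β * (p + x₀ * exp (-p * t))) atTop (𝓝 (β * (p + x₀ * 0))) :=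
      ((tendsto_exp_atBot.comp (tendsto_id.const_mul_atTop_of_neg (neg_lt_zero.2 hp))).const_mul
        x₀ |>.const_add p).const_mul β
    rw [mul_zero, add_zero] at hlim
    exact ((hlim.eventually (gt_mem_nhds hpc)).and (eventually_ge_atTop 0)).exists
  set C := 1 + β * (p + x₀) / b
  have hsmall : ∀ᶠ δ in 𝓝[>] 0, δ * C * T₀ < b⁻¹ - c⁻¹ := by
    refine nhdsWithin_le_nhds (((continuous_id.mul continuous_const).mul continuous_const).tendsto'
      0 0 (by simp) |>.eventually (gt_mem_nhds ?_))
    exact sub_pos.2 (inv_strictAnti₀ hb hbc)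
  filter_upwards [hsmall, self_mem_nhdsWithin] with δ hδ hδ0 x y h hx0 ⟨T, hT0, hyT⟩
  by_contra! hy0
  obtain ⟨E, hE, hyE, hbefore⟩ :=
    exists_first_eq_of_lt_of_le (h.continuousOn_y le_rfl) hT0 (hbc.trans_le hy0) hyT
  have hxE := h.x_le_of_le_y hα hp.le (hx0 ▸ hx₀) fun t ht => (hbefore t ht).le
  rw [hx0] at hxE
  rcases le_or_gt E T₀ with hET | hTE
  · have hyb : ∀ t ∈ Icc 0 E, b ≤ y t := fun t ht => by
      rcases ht.2.lt_or_eq with htE | rfl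
      exacts [(hbefore t ⟨ht.1, htE⟩).le, hyE.ge]
    have hxX : ∀ t ∈ Icc 0 E, x t ≤ p + x₀ := fun t ht => (hxE t ht).trans <| by
      gcongr
      exact mul_le_of_le_one_right hx₀.le (exp_le_one_iff.2 (by nlinarith [ht.1]))
    have hdrift := h.inv_y_le hβ hδ0.le hb (by positivity) hyb hxX E (right_mem_Icc.2 hE.1)
    have hC : δ * C * E ≤ δ * C * T₀ := mul_le_mul_of_nonneg_left hET
      (mul_nonneg hδ0.le (add_nonneg zero_le_one (div_nonneg (by positivity) hb.le)))
    have hy0_inv := inv_anti₀ (hb.trans hbc) hy0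
    rw [hyE] at hdrift
    linarith
  · have hyT₀ := hbefore T₀ ⟨hT₀0, hTE⟩
    have hnull : ∀ t ∈ Ico T₀ E, β * x t < 1 - min (y T₀) c := fun t ht => by
      calc β * x t ≤ β * (p + x₀ * exp (-p * t)) :=
            mul_le_mul_of_nonneg_left (hxE t ⟨hT₀0.trans ht.1, ht.2.le⟩) hβ
        _ ≤ β * (p + x₀ * exp (-p * T₀)) := by
            have hexp : exp (-p * t) ≤ exp (-p * T₀) :=
              exp_le_exp.2 (by nlinarith [mul_nonneg hp.le (sub_nonneg.2 ht.1)])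
            have := mul_le_mul_of_nonneg_left hexp hx₀.le
            exact mul_le_mul_of_nonneg_left (by linarith) hβ
        _ < 1 - c := hT₀
        _ ≤ 1 - min (y T₀) c := by linarith [min_le_right (y T₀) c]
    have hyE_ge := h.le_y_of_x_lt hδ0 hT₀0 (lt_min (hb.trans hyT₀) (hb.trans hbc))
      (min_le_left _ _) hnull E ⟨hTE.le, le_rfl⟩
    rw [hyE] at hyE_ge
    exact (lt_min hyT₀ hbc).not_ge hyE_ge

theorem eventually_lt_y_of_exists_le_y (hα : 0 ≤ α) (hβ : 0 ≤ β) {x₀ b c : ℝ} (hx₀ : 0 < x₀)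
    (hc : 0 < c) (hcb : c < b) (hp : 0 < 1 - α * b) (hpc : 1 - c < β * (1 - α * b)) :
    ∀ᶠ δ in 𝓝[>] 0, ∀ x y : ℝ → ℝ, IsCompetitionTrajectory α β δ x y → x 0 = x₀ → 0 < y 0 →
      (∃ T ≥ 0, b ≤ y T) → c < y 0 := by
  set p := 1 - α * b
  set m := min x₀ (p / 2)
  have hm : 0 < m := lt_min hx₀ (half_pos hp)
  have hmp : m < p := (min_le_right _ _).trans_lt (half_lt_self hp)
  obtain ⟨T₀, hT₀, hT₀0⟩ : ∃ T₀, 1 - c < β * (p + -(p - m) * exp (-(m / 2) * T₀)) ∧ 0 ≤ T₀ := by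
    have hlim : Tendsto (fun t => β * (p + -(p - m) * exp (-(m / 2) * t))) atTop
        (𝓝 (β * (p + -(p - m) * 0))) :=
      ((tendsto_exp_atBot.comp (tendsto_id.const_mul_atTop_of_neg (by linarith))).const_mul
        _ |>.const_add p).const_mul β
    rw [mul_zero, add_zero] at hlim
    exact ((hlim.eventually (lt_mem_nhds hpc)).and (eventually_ge_atTop 0)).exists
  have hsmall : ∀ᶠ δ in 𝓝[>] 0, δ * T₀ < b - c := by
    refine nhdsWithin_le_nhds ((continuous_id.mul continuous_const).tendsto' 0 0 (by simp)
      |>.eventually (gt_mem_nhds (sub_pos.2 hcb)))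
  filter_upwards [hsmall, self_mem_nhdsWithin] with δ hδ hδ0 x y h hx0 hy0pos ⟨T, hT0, hyT⟩
  by_contra! hy0
  obtain ⟨E, hE, hyE, hbefore⟩ :=
    exists_first_eq_of_gt_of_ge (h.continuousOn_y le_rfl) hT0 (hy0.trans_lt hcb) hyT
  have hxE := h.le_x_of_y_le hα (half_pos hm).le (half_lt_self hm) hmp (hx0 ▸ min_le_left _ _)
    fun t ht => (hbefore t ht).le
  rcases le_or_gt E T₀ with hET | hTE
  · have hx : ∀ t ∈ Ico 0 E, 0 ≤ x t := fun t ht => by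
      have := hxE t (Ico_subset_Icc_self ht)
      have : exp (-(m / 2) * t) ≤ 1 := exp_le_one_iff.2 (by nlinarith [ht.1])
      nlinarith
    have hdrift := h.y_le_add_mul hβ hδ0 hy0pos hx E (right_mem_Icc.2 hE.1)
    have hδE : δ * E ≤ δ * T₀ := mul_le_mul_of_nonneg_left hET hδ0.le
    linarith
  · have hyT₀ := hbefore T₀ ⟨hT₀0, hTE⟩
    have hnull : ∀ t ∈ Ico T₀ E, 1 - max (y T₀) c < β * x t := fun t ht => by
      calc 1 - max (y T₀) c ≤ 1 - c := by linarith [le_max_right (y T₀) c]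
        _ < β * (p + -(p - m) * exp (-(m / 2) * T₀)) := hT₀
        _ ≤ β * (p + -(p - m) * exp (-(m / 2) * t)) := by
            have hexp : exp (-(m / 2) * t) ≤ exp (-(m / 2) * T₀) :=
              exp_le_exp.2 (by nlinarith [mul_nonneg hm.le (sub_nonneg.2 ht.1)])
            have := mul_le_mul_of_nonpos_left hexp (by linarith : -(p - m) ≤ 0)
            exact mul_le_mul_of_nonneg_left (by linarith) hβ
        _ ≤ β * x t := mul_le_mul_of_nonneg_left (hxE t ⟨hT₀0.trans ht.1, ht.2.le⟩) hβ
    have hyE_le := h.y_le_of_lt_x hδ0 hT₀0 (hc.trans_le (le_max_right _ _)) (le_max_left _ _)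
      hnull E ⟨hTE.le, le_rfl⟩
    rw [hyE] at hyE_le
    exact (max_lt hyT₀ hcb).not_ge hyE_le

theorem eventually_y_lt_of_tendsto (hα : 0 ≤ α) (hβ : 0 ≤ β) (hαβ : 1 < α * β) (hA : 0 < A)
    (hB : 0 < B) (hx_null : A + α * B = 1) (hy_null : B + β * A = 1) {x₀ u : ℝ} (hx₀ : 0 < x₀)
    (hu : B < u) :
    ∀ᶠ δ in 𝓝[>] 0, ∀ x y : ℝ → ℝ, IsCompetitionTrajectory α β δ x y → x 0 = x₀ →
      Tendsto y atTop (𝓝 B) → y 0 < u := by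
  set η := min ((u - B) / (α * β)) (A / (2 * α))
  have hα0 : 0 < α := pos_of_mul_pos_left (one_pos.trans hαβ) hβ
  have hη : 0 < η := lt_min (div_pos (sub_pos.2 hu) (by linarith)) (by positivity)
  have hηu : α * β * η ≤ u - B := by
    have := min_le_left ((u - B) / (α * β)) (A / (2 * α))
    rwa [le_div_iff₀ (by linarith), mul_comm] at this
  have hηA : 2 * α * η ≤ A := by
    have := min_le_right ((u - B) / (α * β)) (A / (2 * α))
    rwa [le_div_iff₀ (by positivity), mul_comm] at this
  filter_upwards [eventually_y_lt_of_exists_y_le hα hβ hx₀ (b := B + η)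
    (c := B + (1 + α * β) * η / 2) (by positivity) (by nlinarith) (by nlinarith)
    (by nlinarith)] with δ hδ x y h hx0 hlim
  obtain ⟨T, hyT, hT⟩ :=
    ((hlim.eventually (ge_mem_nhds (lt_add_of_pos_right B hη))).and (eventually_ge_atTop 0)).exists
  exact (hδ x y h hx0 ⟨T, hT, hyT⟩).trans_le (by nlinarith)

theorem eventually_lt_y_of_tendsto (hα : 0 ≤ α) (hβ : 0 ≤ β) (hαβ : 1 < α * β) (hA : 0 < A)
    (hB : 0 < B) (hx_null : A + α * B = 1) (hy_null : B + β * A = 1) {x₀ l : ℝ} (hx₀ : 0 < x₀)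
    (hl : l < B) :
    ∀ᶠ δ in 𝓝[>] 0, ∀ x y : ℝ → ℝ, IsCompetitionTrajectory α β δ x y → x 0 = x₀ → 0 < y 0 →
      Tendsto y atTop (𝓝 B) → l < y 0 := by
  set η := min ((B - l) / (α * β)) (B / (2 * (α * β)))
  have hη : 0 < η := lt_min (div_pos (sub_pos.2 hl) (by linarith)) (by positivity)
  have hηl : α * β * η ≤ B - l := by
    have := min_le_left ((B - l) / (α * β)) (B / (2 * (α * β)))
    rwa [le_div_iff₀ (by linarith), mul_comm] at this
  have hηB : 2 * (α * β) * η ≤ B := by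
    have := min_le_right ((B - l) / (α * β)) (B / (2 * (α * β)))
    rwa [le_div_iff₀ (by positivity), mul_comm] at this
  filter_upwards [eventually_lt_y_of_exists_le_y hα hβ hx₀ (b := B - η)
    (c := B - (1 + α * β) * η / 2) (by nlinarith) (by nlinarith) (by nlinarith)
    (by nlinarith)] with δ hδ x y h hx0 hy0 hlim
  obtain ⟨T, hyT, hT⟩ :=
    ((hlim.eventually (le_mem_nhds (sub_lt_self B hη))).and (eventually_ge_atTop 0)).exists
  exact (by nlinarith : l ≤ B - (1 + α * β) * η / 2).trans_lt (hδ x y h hx0 hy0 ⟨T, hT, hyT⟩)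

end Separatrix

/-- Limit of the separatrix as `δ → 0⁺`: if for each `δ > 0` the point
`(x₀, s δ)` lies on the stable manifold of the saddle `(A,B)` for the system
with parameter `δ`, then `s δ → B` as `δ → 0⁺`. -/
theorem stmt_18 (α β : ℝ) (hα : 1 < α) (hβ : 1 < β)
    (A B : ℝ) (hA : A = (α - 1) / (α * β - 1)) (hB : B = (β - 1) / (α * β - 1))
    (x₀ : ℝ) (hx₀ : 0 < x₀) (s : ℝ → ℝ)
    (hs : ∀ δ : ℝ, 0 < δ → 0 < s δ ∧
      ∃ x y : ℝ → ℝ,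
        (∀ t ∈ Set.Ici (0 : ℝ),
          HasDerivWithinAt x (x t * (1 - x t - α * y t)) (Set.Ici 0) t) ∧
        (∀ t ∈ Set.Ici (0 : ℝ),
          HasDerivWithinAt y (δ * y t * (1 - y t - β * x t)) (Set.Ici 0) t) ∧
        x 0 = x₀ ∧ y 0 = s δ ∧
        Tendsto (fun t => (x t, y t)) atTop (nhds (A, B))) :
    Tendsto s (nhdsWithin 0 (Set.Ioi 0)) (nhds B) := by
  have hαβ : 1 < α * β := by nlinarith
  have hαβ0 : 0 < α * β - 1 := sub_pos.2 hαβ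
  have hA0 : 0 < A := hA ▸ div_pos (sub_pos.2 hα) hαβ0
  have hB0 : 0 < B := hB ▸ div_pos (sub_pos.2 hβ) hαβ0
  have hx_null : A + α * B = 1 := by
    rw [hA, hB, mul_div_assoc', ← add_div, div_eq_one_iff_eq hαβ0.ne']; ring
  have hy_null : B + β * A = 1 := by
    rw [hA, hB, mul_div_assoc', ← add_div, div_eq_one_iff_eq hαβ0.ne']; ring
  have hα0 : 0 ≤ α := by linarith
  have hβ0 : 0 ≤ β := by linarith
  refine tendsto_order.2 ⟨fun l hl => ?_, fun u hu => ?_⟩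
  · filter_upwards [eventually_lt_y_of_tendsto hα0 hβ0 hαβ hA0 hB0 hx_null hy_null hx₀ hl,
      self_mem_nhdsWithin] with δ hδ hδ0
    obtain ⟨hs0, x, y, hx, hy, hx0, hy0, hlim⟩ := hs δ hδ0
    exact hy0 ▸ hδ x y ⟨hx, hy⟩ hx0 (hy0 ▸ hs0) hlim.snd_nhds
  · filter_upwards [eventually_y_lt_of_tendsto hα0 hβ0 hαβ hA0 hB0 hx_null hy_null hx₀ hu,
      self_mem_nhdsWithin] with δ hδ hδ0
    obtain ⟨-, x, y, hx, hy, hx0, hy0, hlim⟩ := hs δ hδ0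
    exact hy0 ▸ hδ x y ⟨hx, hy⟩ hx0 hlim.snd_nhds
end

section
/- Fix α>1, β>1 and set A=(α−1)/(αβ−1), B=(β−1)/(αβ−1). For δ>0 and x₀>0 let s(x₀,δ)>0 denote the unique value such that the solution of the system dx/dt = x(1−x−αy), dy/dt = δy(1−y−βx) on [0,∞) with initial condition (x₀,s(x₀,δ)) converges to (A,B) as t→∞. Then for every fixed x₀ with 0<x₀<A, s(x₀,δ) → 0 as δ→∞, and for every fixed x₀>A, s(x₀,δ) → ∞ as δ→∞; that is, as 1/δ→0 the separatrix converges to the vertical line x=A. -/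
/-!
Fix `c` with `0 < x₀ < c < A` and a level `m` with `(1 - c) / α < m < 1 - β c` (possible exactly
because `c < A`). The rectangle `{x < c, y > m}` is forward invariant: on its side `x = c` the
field points to decreasing `x`, on its side `y = m` to increasing `y`. A solution entering it keeps
`x < c`, so it cannot tend to `(A, B)`. If `y(0) ≥ ε`, then while the solution stays in the strip
`0 < x < c, 0 < y < m` Grönwall's inequality gives `y(t) ≥ ε e^{δ (1 - m - β c) t}` and
`x(t) ≤ x₀ eᵗ`, so for `δ` large `y` reaches `m` while `x` is still below `c`: the solution enters
the rectangle. Hence `s δ < ε` for large `δ`. For `x₀ > A` the same argument runs with the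
rectangle `{x > c, y < m}`, `A < c < x₀`, and `y(t) ≤ y(0) e^{δ (1 - m - β c) t}` decaying
(now `1 - m - β c < 0`) from any bounded initial value, which forces `s δ → ∞`.
-/

open Set Filter Topology Real

theorem ContinuousOn.exists_first_exit {X : Type*} [TopologicalSpace X] {f : ℝ → X} {U : Set X}
    {a b : ℝ} (hab : a ≤ b) (hf : ContinuousOn f (Icc a b)) (hU : IsOpen U) (ha : f a ∈ U)
    (hb : f b ∉ U) : ∃ τ ∈ Ioc a b, f τ ∉ U ∧ ∀ t ∈ Ico a τ, f t ∈ U := by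
  set E := Icc a b ∩ f ⁻¹' Uᶜ
  have hE : IsClosed E := hf.preimage_isClosed_of_isClosed isClosed_Icc hU.isClosed_compl
  have hbE : b ∈ E := ⟨right_mem_Icc.2 hab, hb⟩
  have hbdd : BddBelow E := ⟨a, fun t ht => ht.1.1⟩
  obtain ⟨⟨haτ, hτb⟩, hτ⟩ := hE.csInf_mem ⟨b, hbE⟩ hbdd
  refine ⟨sInf E, ⟨lt_of_le_of_ne haτ fun h => hτ (h ▸ ha), hτb⟩, hτ, fun t ht => ?_⟩
  by_contra h
  exact (csInf_le hbdd ⟨⟨ht.1, ht.2.le.trans hτb⟩, h⟩).not_gt ht.2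

theorem HasDerivWithinAt.nonneg_of_le_left {f : ℝ → ℝ} {f' a b : ℝ}
    (hf : HasDerivWithinAt f f' (Iio b) b) (hab : a < b) (hle : ∀ t ∈ Ioo a b, f t ≤ f b) :
    0 ≤ f' := by
  refine ge_of_tendsto ((hasDerivWithinAt_iff_tendsto_slope' (s := Iio b) (lt_irrefl b)).1 hf) ?_
  filter_upwards [Ioo_mem_nhdsLT hab] with t ht
  rw [slope_def_field]
  exact div_nonneg_of_nonpos (sub_nonpos.2 (hle t ht)) (sub_nonpos.2 ht.2.le)

theorem forall_hasDerivWithinAt_Ici_of_le {f f' : ℝ → ℝ} {a b : ℝ}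
    (hf : ∀ t ∈ Ici a, HasDerivWithinAt f (f' t) (Ici a) t) (hab : a ≤ b) :
    ∀ t ∈ Ici b, HasDerivWithinAt f (f' t) (Ici b) t :=
  fun t ht => (hf t (hab.trans ht)).mono (Ici_subset_Ici.2 hab)

theorem mapsTo_Iio_prod_Iio_of_deriv_neg {u v u' v' : ℝ → ℝ} {a : ℝ}
    (hu : ∀ t ∈ Ici a, HasDerivWithinAt u (u' t) (Ici a) t)
    (hv : ∀ t ∈ Ici a, HasDerivWithinAt v (v' t) (Ici a) t)
    (hu' : ∀ t, u t = 0 → v t ≤ 0 → u' t < 0) (hv' : ∀ t, v t = 0 → u t ≤ 0 → v' t < 0)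
    (ha : u a < 0 ∧ v a < 0) : MapsTo (fun t => (u t, v t)) (Ici a) (Iio 0 ×ˢ Iio 0) := by
  intro b hb
  by_contra hbad
  have hcont : ContinuousOn (fun t => (u t, v t)) (Icc a b) := fun t ht =>
    ((hu t ht.1).continuousWithinAt.prodMk (hv t ht.1).continuousWithinAt).mono
      Icc_subset_Ici_self
  obtain ⟨τ, ⟨haτ, -⟩, hτ, hbefore⟩ :=
    hcont.exists_first_exit hb (isOpen_Iio.prod isOpen_Iio) ha hbad
  -- At the first exit time some component vanishes after being negative, so it cannot be
  -- decreasing there.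
  have boundary : ∀ {w w' : ℝ → ℝ}, (∀ t ∈ Ici a, HasDerivWithinAt w (w' t) (Ici a) t) →
      (∀ t ∈ Ico a τ, w t < 0) → w τ ≤ 0 ∧ (w τ = 0 → 0 ≤ w' τ) := by
    intro w w' hw hneg
    have hd : HasDerivAt w (w' τ) τ := (hw τ haτ.le).hasDerivAt (Ici_mem_nhds haτ)
    refine ⟨le_of_tendsto (hd.continuousAt.tendsto.mono_left (nhdsWithin_le_nhds (s := Iio τ))) ?_,
      fun h0 => hd.hasDerivWithinAt.nonneg_of_le_left haτ fun t ht => ?_⟩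
    · filter_upwards [Ioo_mem_nhdsLT haτ] with t ht
      exact (hneg t ⟨ht.1.le, ht.2⟩).le
    · exact h0 ▸ (hneg t ⟨ht.1.le, ht.2⟩).le
  obtain ⟨hu0, hu'0⟩ := boundary hu fun t ht => (hbefore t ht).1
  obtain ⟨hv0, hv'0⟩ := boundary hv fun t ht => (hbefore t ht).2
  simp only [mem_prod, mem_Iio, not_and_or, not_lt] at hτ
  rcases hτ with h | h
  · exact (hu' τ (hu0.antisymm h) hv0).not_ge (hu'0 (hu0.antisymm h))
  · exact (hv' τ (hv0.antisymm h) hu0).not_ge (hv'0 (hv0.antisymm h))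

theorem le_mul_exp_of_deriv_le {f f' : ℝ → ℝ} {K a b : ℝ}
    (hf : ∀ t ∈ Ici a, HasDerivWithinAt f (f' t) (Ici a) t)
    (bound : ∀ t ∈ Ico a b, f' t ≤ K * f t) :
    ∀ t ∈ Icc a b, f t ≤ f a * exp (K * (t - a)) := by
  intro t ht
  have := le_gronwallBound_of_liminf_deriv_right_le
    (fun t ht => (hf t ht.1).continuousWithinAt.mono Icc_subset_Ici_self)
    (fun t ht _ hr => ((hf t ht.1).mono (Ici_subset_Ici.2 ht.1)).liminf_right_slope_le hr)
    (le_refl (f a)) (K := K) (ε := 0) (by simpa using bound) t ht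
  rwa [gronwallBound_ε0] at this

theorem mul_exp_le_of_le_deriv {f f' : ℝ → ℝ} {K a b : ℝ}
    (hf : ∀ t ∈ Ici a, HasDerivWithinAt f (f' t) (Ici a) t)
    (bound : ∀ t ∈ Ico a b, K * f t ≤ f' t) :
    ∀ t ∈ Icc a b, f a * exp (K * (t - a)) ≤ f t := by
  intro t ht
  have := le_mul_exp_of_deriv_le (f := fun t => -f t) (fun t ht => (hf t ht).neg)
    (fun t ht => by linarith [bound t ht]) t ht
  linarith

structure IsCompetitionSolution (α β δ : ℝ) (x y : ℝ → ℝ) : Prop where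
  hasDerivWithinAt_x :
    ∀ t ∈ Ici (0 : ℝ), HasDerivWithinAt x (x t * (1 - x t - α * y t)) (Ici 0) t
  hasDerivWithinAt_y :
    ∀ t ∈ Ici (0 : ℝ), HasDerivWithinAt y (δ * y t * (1 - y t - β * x t)) (Ici 0) t

namespace IsCompetitionSolution

variable {α β δ : ℝ} {x y : ℝ → ℝ}

theorem continuousOn (sol : IsCompetitionSolution α β δ x y) :
    ContinuousOn (fun t => (x t, y t)) (Ici 0) := fun t ht =>
  (sol.hasDerivWithinAt_x t ht).continuousWithinAt.prodMk
    (sol.hasDerivWithinAt_y t ht).continuousWithinAt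

theorem mapsTo_Iio_prod_Ioi (sol : IsCompetitionSolution α β δ x y) {c m T : ℝ}
    (hα : 0 ≤ α) (hβ : 0 ≤ β) (hδ : 0 < δ) (hc : 0 < c) (hm : 0 < m)
    (hcm : 1 - c < α * m) (hmc : m + β * c < 1) (hT : 0 ≤ T) (hxT : x T < c) (hyT : m < y T) :
    MapsTo (fun t => (x t, y t)) (Ici T) (Iio c ×ˢ Ioi m) := by
  have hx := forall_hasDerivWithinAt_Ici_of_le sol.hasDerivWithinAt_x hT
  have hy := forall_hasDerivWithinAt_Ici_of_le sol.hasDerivWithinAt_y hT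
  have key := mapsTo_Iio_prod_Iio_of_deriv_neg (u := fun t => x t - c) (v := fun t => m - y t)
    (fun t ht => (hx t ht).sub_const c) (fun t ht => (hy t ht).const_sub m)
    (fun t hxt hyt => by
      rw [show x t = c by linarith]
      have := mul_le_mul_of_nonneg_left (show m ≤ y t by linarith) hα
      exact mul_neg_of_pos_of_neg hc (by linarith))
    (fun t hyt hxt => by
      rw [show y t = m by linarith]
      have := mul_le_mul_of_nonneg_left (show x t ≤ c by linarith) hβ
      exact neg_lt_zero.2 (mul_pos (mul_pos hδ hm) (by linarith)))
    ⟨by linarith, by linarith⟩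
  exact fun t ht => by simpa only [mem_prod, mem_Iio, mem_Ioi, sub_neg] using key ht

theorem mapsTo_Ioi_prod_Iio (sol : IsCompetitionSolution α β δ x y) {c m T : ℝ}
    (hα : 0 ≤ α) (hβ : 0 ≤ β) (hδ : 0 < δ) (hc : 0 < c) (hm : 0 < m)
    (hcm : α * m < 1 - c) (hmc : 1 < m + β * c) (hT : 0 ≤ T) (hxT : c < x T) (hyT : y T < m) :
    MapsTo (fun t => (x t, y t)) (Ici T) (Ioi c ×ˢ Iio m) := by
  have hx := forall_hasDerivWithinAt_Ici_of_le sol.hasDerivWithinAt_x hT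
  have hy := forall_hasDerivWithinAt_Ici_of_le sol.hasDerivWithinAt_y hT
  have key := mapsTo_Iio_prod_Iio_of_deriv_neg (u := fun t => c - x t) (v := fun t => y t - m)
    (fun t ht => (hx t ht).const_sub c) (fun t ht => (hy t ht).sub_const m)
    (fun t hxt hyt => by
      rw [show x t = c by linarith]
      have := mul_le_mul_of_nonneg_left (show y t ≤ m by linarith) hα
      exact neg_lt_zero.2 (mul_pos hc (by linarith)))
    (fun t hyt hxt => by
      rw [show y t = m by linarith]
      have := mul_le_mul_of_nonneg_left (show c ≤ x t by linarith) hβ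
      exact mul_neg_of_pos_of_neg (mul_pos hδ hm) (by linarith))
    ⟨by linarith, by linarith⟩
  exact fun t ht => by simpa only [mem_prod, mem_Iio, mem_Ioi, sub_neg] using key ht

theorem exists_mem_Iio_prod_Ici (sol : IsCompetitionSolution α β δ x y) {c m h b : ℝ}
    (hα : 0 ≤ α) (hβ : 0 ≤ β) (hδ : 0 ≤ δ) (hx0 : 0 < x 0) (hy0 : 0 < y 0)
    (hh : 0 ≤ h) (hxh : x 0 * exp h < c)
    (hyh : m < y 0 * exp (δ * (1 - m - β * c) * h)) (hb : 0 ≤ b) (hxb : c ≤ x b) :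
    ∃ T ≥ 0, (x T, y T) ∈ Iio c ×ˢ Ici m := by
  have hx0c : x 0 < c := lt_of_le_of_lt (le_mul_of_one_le_right hx0.le (one_le_exp hh)) hxh
  rcases le_or_gt m (y 0) with hym | hym
  · exact ⟨0, le_rfl, hx0c, hym⟩
  obtain ⟨τ, ⟨hτ, -⟩, hτS, hS⟩ := (sol.continuousOn.mono Icc_subset_Ici_self).exists_first_exit
    hb (isOpen_Ioo.prod isOpen_Ioo) ⟨⟨hx0, hx0c⟩, hy0, hym⟩ fun h => hxb.not_gt h.1.2
  have hx_le := le_mul_exp_of_deriv_le (K := 1) sol.hasDerivWithinAt_x fun t ht => by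
    obtain ⟨⟨hx1, -⟩, hy1, -⟩ := hS t ht
    nlinarith [mul_nonneg (mul_nonneg hα hx1.le) hy1.le]
  have hx_ge := mul_exp_le_of_le_deriv (K := -(c + α * m)) sol.hasDerivWithinAt_x fun t ht => by
    obtain ⟨⟨hx1, hx2⟩, -, hy2⟩ := hS t ht
    nlinarith [mul_nonneg hx1.le (mul_nonneg hα (sub_nonneg.2 hy2.le))]
  have hy_ge := mul_exp_le_of_le_deriv (K := δ * (1 - m - β * c)) sol.hasDerivWithinAt_y
    fun t ht => by
      obtain ⟨⟨-, hx2⟩, hy1, hy2⟩ := hS t ht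
      nlinarith [mul_nonneg (mul_nonneg hδ hy1.le)
        (add_nonneg (sub_nonneg.2 hy2.le) (mul_nonneg hβ (sub_nonneg.2 hx2.le)))]
  simp only [sub_zero] at hx_le hx_ge hy_ge
  -- Within time `h` the `y`-coordinate has grown past `m`, so the exit happens before then.
  have hτh : τ ≤ h := by
    by_contra! hτh
    linarith [hy_ge h ⟨hh, hτh.le⟩, (hS h ⟨hh, hτh⟩).2.2]
  have hxτ : x τ < c := (hx_le τ ⟨hτ.le, le_rfl⟩).trans_lt
    ((mul_le_mul_of_nonneg_left (by simpa using hτh) hx0.le).trans_lt hxh)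
  refine ⟨τ, hτ.le, hxτ, not_lt.1 fun hyτ => hτS ⟨⟨?_, hxτ⟩, ?_, hyτ⟩⟩
  · exact (mul_pos hx0 (exp_pos _)).trans_le (hx_ge τ ⟨hτ.le, le_rfl⟩)
  · exact (mul_pos hy0 (exp_pos _)).trans_le (hy_ge τ ⟨hτ.le, le_rfl⟩)

theorem exists_mem_Ioi_prod_Iic (sol : IsCompetitionSolution α β δ x y) {c m h b X N : ℝ}
    (hα : 0 ≤ α) (hβ : 0 ≤ β) (hδ : 0 ≤ δ) (hc : 0 < c) (hm : 0 < m) (hmc : 1 < m + β * c)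
    (hcx0 : c < x 0) (hy0 : y 0 < N) (hh : 0 ≤ h) (hxh : x 0 * exp h < X)
    (hxh' : c < x 0 * exp (-(X + α * N) * h)) (hyh : y 0 * exp (δ * (1 - m - β * c) * h) < m)
    (hb : 0 ≤ b) (hxb : x b ≤ c) :
    ∃ T ≥ 0, (x T, y T) ∈ Ioi c ×ˢ Iic m := by
  have hx0 : 0 < x 0 := hc.trans hcx0
  have hx0X : x 0 < X := lt_of_le_of_lt (le_mul_of_one_le_right hx0.le (one_le_exp hh)) hxh
  rcases le_or_gt (y 0) m with hym | hym
  · exact ⟨0, le_rfl, hcx0, hym⟩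
  obtain ⟨τ, ⟨hτ, -⟩, hτS, hS⟩ := (sol.continuousOn.mono Icc_subset_Ici_self).exists_first_exit
    hb (isOpen_Ioo.prod isOpen_Ioo) ⟨⟨hcx0, hx0X⟩, hym, hy0⟩ fun h => hxb.not_gt h.1.1
  have hx_le := le_mul_exp_of_deriv_le (K := 1) sol.hasDerivWithinAt_x fun t ht => by
    obtain ⟨⟨hx1, -⟩, hy1, -⟩ := hS t ht
    nlinarith [mul_nonneg (mul_nonneg hα (hc.trans hx1).le) (hm.trans hy1).le]
  have hx_ge := mul_exp_le_of_le_deriv (K := -(X + α * N)) sol.hasDerivWithinAt_x fun t ht => by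
    obtain ⟨⟨hx1, hx2⟩, -, hy2⟩ := hS t ht
    nlinarith [mul_nonneg (hc.trans hx1).le (mul_nonneg hα (sub_nonneg.2 hy2.le))]
  have hy_le := le_mul_exp_of_deriv_le (K := δ * (1 - m - β * c)) sol.hasDerivWithinAt_y
    fun t ht => by
      obtain ⟨⟨hx1, -⟩, hy1, -⟩ := hS t ht
      nlinarith [mul_nonneg (mul_nonneg hδ (hm.trans hy1).le)
        (add_nonneg (sub_nonneg.2 hy1.le) (mul_nonneg hβ (sub_nonneg.2 hx1.le)))]
  simp only [sub_zero] at hx_le hx_ge hy_le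
  have hτh : τ ≤ h := by
    by_contra! hτh
    linarith [hy_le h ⟨hh, hτh.le⟩, (hS h ⟨hh, hτh⟩).2.1]
  have hXN : 0 ≤ X + α * N := by nlinarith
  have hxτ : c < x τ := hxh'.trans_le <| (mul_le_mul_of_nonneg_left
    (exp_le_exp.2 (by nlinarith)) hx0.le).trans (hx_ge τ ⟨hτ.le, le_rfl⟩)
  refine ⟨τ, hτ.le, hxτ, not_lt.1 fun hyτ => hτS ⟨⟨hxτ, ?_⟩, hyτ, ?_⟩⟩
  · exact (hx_le τ ⟨hτ.le, le_rfl⟩).trans_lt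
      ((mul_le_mul_of_nonneg_left (by simpa using hτh) hx0.le).trans_lt hxh)
  · refine ((hy_le τ ⟨hτ.le, le_rfl⟩).trans ?_).trans_lt hy0
    exact mul_le_of_le_one_right (hm.trans hym).le
      (exp_le_one_iff.2 (by nlinarith [mul_nonneg hδ hτ.le]))

end IsCompetitionSolution

theorem eventually_forall_eventually_lt {α β x₀ c ε : ℝ} (hα : 0 < α) (hβ : 0 ≤ β)
    (hx₀ : 0 < x₀) (hx₀c : x₀ < c) (hc : c < 1) (hcβ : 1 - c < α * (1 - β * c)) (hε : 0 < ε) :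
    ∀ᶠ δ in atTop, ∀ x y : ℝ → ℝ, IsCompetitionSolution α β δ x y → x 0 = x₀ → ε ≤ y 0 →
      ∀ᶠ t in atTop, x t < c := by
  have hq : 0 < (1 - c) / α := div_pos (by linarith) hα
  -- The trapping level `m₁` lies below the level `m₂` at which the solution leaves the strip.
  obtain ⟨m₁, hqm₁, hm₁p⟩ := exists_between (show (1 - c) / α < 1 - β * c by
    rwa [div_lt_iff₀ hα, mul_comm])
  obtain ⟨m₂, hm₁₂, hm₂p⟩ := exists_between hm₁p
  have hm₁ : 1 - c < α * m₁ := by rwa [div_lt_iff₀' hα] at hqm₁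
  obtain ⟨h, hxh, hh⟩ : ∃ h, x₀ * exp h < c ∧ 0 < h := by
    have : ∀ᶠ h in 𝓝 0, x₀ * exp h < c :=
      ((continuous_const.mul continuous_exp).tendsto' 0 x₀ (by simp)).eventually
        (eventually_lt_nhds hx₀c)
    exact ((this.filter_mono nhdsWithin_le_nhds).and (self_mem_nhdsWithin (s := Ioi 0))).exists
  have hgrow : Tendsto (fun δ => ε * exp (δ * ((1 - m₂ - β * c) * h))) atTop atTop :=
    (tendsto_exp_atTop.comp (tendsto_id.atTop_mul_const
      (mul_pos (by linarith) hh))).const_mul_atTop hε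
  filter_upwards [hgrow.eventually_gt_atTop m₂, eventually_gt_atTop 0]
    with δ hδm hδ x y sol hx0 hy0
  by_contra hnot
  obtain ⟨b, hxb, hb⟩ := ((not_eventually.1 hnot).and_eventually (eventually_ge_atTop 0)).exists
  have hyh : m₂ < y 0 * exp (δ * (1 - m₂ - β * c) * h) := by
    rw [mul_assoc δ]
    exact hδm.trans_le (by gcongr)
  obtain ⟨T, hT, hxT : x T < c, hyT : m₂ ≤ y T⟩ := sol.exists_mem_Iio_prod_Ici hα.le hβ hδ.le
    (hx0 ▸ hx₀) (hε.trans_le hy0) hh.le (hx0 ▸ hxh) hyh hb (not_lt.1 hxb)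
  refine hnot (eventually_atTop.2 ⟨T, fun t ht => ?_⟩)
  exact (sol.mapsTo_Iio_prod_Ioi hα.le hβ hδ (hx₀.trans hx₀c) (by linarith) hm₁ (by linarith)
    hT hxT (by linarith) ht).1

theorem eventually_forall_eventually_gt {α β x₀ c M : ℝ} (hα : 0 < α) (hβ : 0 ≤ β)
    (hc : 0 < c) (hcx₀ : c < x₀) (hc1 : c < 1) (hcβ : α * (1 - β * c) < 1 - c) :
    ∀ᶠ δ in atTop, ∀ x y : ℝ → ℝ, IsCompetitionSolution α β δ x y → x 0 = x₀ → y 0 ≤ M →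
      ∀ᶠ t in atTop, c < x t := by
  -- The trapping level `m₁` lies above the level `m₂` at which the solution leaves the strip.
  obtain ⟨m₂, hm₂max, hm₂q⟩ := exists_between (show max (1 - β * c) 0 < (1 - c) / α from
    max_lt (by rwa [lt_div_iff₀ hα, mul_comm]) (div_pos (by linarith) hα))
  obtain ⟨m₁, hm₂₁, hm₁q⟩ := exists_between hm₂q
  obtain ⟨hpm₂, hm₂⟩ := max_lt_iff.1 hm₂max
  have hm₁ : α * m₁ < 1 - c := by rwa [lt_div_iff₀' hα] at hm₁q
  set X := 2 * x₀
  set N := M + 1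
  obtain ⟨h, ⟨hxh, hxh'⟩, hh⟩ :
      ∃ h, (x₀ * exp h < X ∧ c < x₀ * exp (-(X + α * N) * h)) ∧ 0 < h := by
    have : ∀ᶠ h in 𝓝 0, x₀ * exp h < X ∧ c < x₀ * exp (-(X + α * N) * h) :=
      (((continuous_const.mul continuous_exp).tendsto' 0 x₀ (by simp)).eventually
        (eventually_lt_nhds (by linarith))).and
      (((continuous_const.mul (continuous_exp.comp (continuous_const_mul _))).tendsto' 0 x₀
        (by simp)).eventually (eventually_gt_nhds hcx₀))
    exact ((this.filter_mono nhdsWithin_le_nhds).and (self_mem_nhdsWithin (s := Ioi 0))).exists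
  have hdecay : Tendsto (fun δ => M * exp (δ * ((1 - m₂ - β * c) * h))) atTop (𝓝 0) := by
    simpa using (tendsto_exp_atBot.comp (tendsto_id.atTop_mul_const_of_neg
      (mul_neg_of_neg_of_pos (by linarith) hh))).const_mul M
  filter_upwards [hdecay.eventually (eventually_lt_nhds hm₂), eventually_gt_atTop 0]
    with δ hδm hδ x y sol hx0 hy0
  by_contra hnot
  obtain ⟨b, hxb, hb⟩ := ((not_eventually.1 hnot).and_eventually (eventually_ge_atTop 0)).exists
  have hyh : y 0 * exp (δ * (1 - m₂ - β * c) * h) < m₂ := by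
    rw [mul_assoc δ]
    exact (by gcongr : _ ≤ M * _).trans_lt hδm
  obtain ⟨T, hT, hxT : c < x T, hyT : y T ≤ m₂⟩ := sol.exists_mem_Ioi_prod_Iic hα.le hβ hδ.le hc
    (by linarith) (by linarith) (hx0 ▸ hcx₀) (by linarith) hh.le (hx0 ▸ hxh) (hx0 ▸ hxh') hyh hb
    (not_lt.1 hxb)
  refine hnot (eventually_atTop.2 ⟨T, fun t ht => ?_⟩)
  exact (sol.mapsTo_Ioi_prod_Iio hα.le hβ hδ hc (by linarith) hm₁ (by linarith)
    hT hxT (by linarith) ht).1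

theorem stmt_19_general (α β : ℝ) (hα : 1 < α) (hβ : 1 < β)
    (A B : ℝ) (hA : A = (α - 1) / (α * β - 1))
    (x₀ : ℝ) (hx₀ : 0 < x₀) (s : ℝ → ℝ)
    (hs : ∀ δ : ℝ, 0 < δ → 0 < s δ ∧
      ∃ x y : ℝ → ℝ,
        (∀ t ∈ Set.Ici (0 : ℝ),
          HasDerivWithinAt x (x t * (1 - x t - α * y t)) (Set.Ici 0) t) ∧
        (∀ t ∈ Set.Ici (0 : ℝ),
          HasDerivWithinAt y (δ * y t * (1 - y t - β * x t)) (Set.Ici 0) t) ∧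
        x 0 = x₀ ∧ y 0 = s δ ∧
        Tendsto (fun t => (x t, y t)) atTop (nhds (A, B))) :
    (x₀ < A → Tendsto s atTop (nhds 0)) ∧
    (A < x₀ → Tendsto s atTop atTop) := by
  have hαβ : 0 < α * β - 1 := by nlinarith
  have hA0 : 0 < A := hA ▸ div_pos (by linarith) hαβ
  have hA1 : A < 1 := by rw [hA, div_lt_one hαβ]; nlinarith
  refine ⟨fun hxA => tendsto_order.2 ⟨fun a ha => ?_, fun b hb => ?_⟩, fun hAx => ?_⟩
  · filter_upwards [eventually_gt_atTop 0] with δ hδ using ha.trans (hs δ hδ).1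
  · obtain ⟨c, hx₀c, hcA⟩ := exists_between hxA
    have hcβ : 1 - c < α * (1 - β * c) := by
      rw [hA, lt_div_iff₀ hαβ] at hcA; linarith
    filter_upwards [eventually_forall_eventually_lt (by linarith) (by linarith) hx₀ hx₀c
      (hcA.trans hA1) hcβ hb, eventually_gt_atTop 0] with δ hδb hδ
    obtain ⟨-, x, y, hx, hy, hx0, hy0, hlim⟩ := hs δ hδ
    by_contra! hsb
    obtain ⟨t, hlt, hgt⟩ := ((hδb x y ⟨hx, hy⟩ hx0 (hy0 ▸ hsb)).and
      (hlim.fst_nhds.eventually (eventually_gt_nhds hcA))).exists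
    exact lt_asymm hlt hgt
  · obtain ⟨c, hAc, hc⟩ := exists_between (lt_min hAx hA1)
    have hcβ : α * (1 - β * c) < 1 - c := by
      rw [hA, div_lt_iff₀ hαβ] at hAc; linarith
    refine tendsto_atTop.2 fun M => ?_
    filter_upwards [eventually_forall_eventually_gt (M := M) (by linarith) (by linarith)
      (hA0.trans hAc) (hc.trans_le (min_le_left _ _)) (hc.trans_le (min_le_right _ _)) hcβ,
      eventually_gt_atTop 0] with δ hδM hδ
    obtain ⟨-, x, y, hx, hy, hx0, hy0, hlim⟩ := hs δ hδ
    by_contra! hsM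
    obtain ⟨t, hgt, hlt⟩ := ((hδM x y ⟨hx, hy⟩ hx0 (hy0 ▸ hsM.le)).and
      (hlim.fst_nhds.eventually (eventually_lt_nhds hAc))).exists
    exact lt_asymm hlt hgt

/-- Limit of the separatrix as `δ → ∞`: if for each `δ > 0` the point
`(x₀, s δ)` lies on the stable manifold of the saddle `(A,B)` for the system
with parameter `δ`, then `s δ → 0` as `δ → ∞` when `0 < x₀ < A`, and
`s δ → ∞` as `δ → ∞` when `x₀ > A`. -/
theorem stmt_19 (α β : ℝ) (hα : 1 < α) (hβ : 1 < β)
    (A B : ℝ) (hA : A = (α - 1) / (α * β - 1)) (hB : B = (β - 1) / (α * β - 1))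
    (x₀ : ℝ) (hx₀ : 0 < x₀) (s : ℝ → ℝ)
    (hs : ∀ δ : ℝ, 0 < δ → 0 < s δ ∧
      ∃ x y : ℝ → ℝ,
        (∀ t ∈ Set.Ici (0 : ℝ),
          HasDerivWithinAt x (x t * (1 - x t - α * y t)) (Set.Ici 0) t) ∧
        (∀ t ∈ Set.Ici (0 : ℝ),
          HasDerivWithinAt y (δ * y t * (1 - y t - β * x t)) (Set.Ici 0) t) ∧
        x 0 = x₀ ∧ y 0 = s δ ∧
        Tendsto (fun t => (x t, y t)) atTop (nhds (A, B))) :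
    (x₀ < A → Tendsto s atTop (nhds 0)) ∧
    (A < x₀ → Tendsto s atTop atTop) :=
  stmt_19_general α β hα hβ A B hA x₀ hx₀ s hs
end
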